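/- arXiv:1109.2398 — 8 statements merged into one kernel-verified Lean document; each statement's English description precedes it below -/
import Mathlib

section
/- Let u_0 = u be a nonzero element of a field of characteristic 0 with 1+u ≠ 0, v = (1+u)^{m+1} u^{-m}, and let u_1, ..., u_m be the other m roots of (1+U)^{m+1} = U^m v. Then for 0 ≤ j ≤ m-1, the elementary symmetric polynomial e_{m-j}(u_1, ..., u_m) equals (-1)^{m-j-1} · ∑_{p=0}^{j} binomial(m+1, p) u^{p-j-1}. In particular each e_{m-j}(u_1,...,u_m) is a polynomial in 1/u. -/
open Polynomial

theorem stmt_6 (K : Type*) [Field K] [CharZero K] [IsAlgClosed K]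
    (m : ℕ) (hm : 1 ≤ m) (u : K) (hu : u ≠ 0) (hu1 : 1 + u ≠ 0)
    (v : K) (hv : v = (1 + u) ^ (m + 1) / u ^ m)
    (r : Fin m → K)
    (hr : ((1 + X) ^ (m + 1) - C v * X ^ m : K[X])
        = (X - C u) * ∏ i, (X - C (r i))) :
    ∀ j < m,
      ∑ S ∈ Finset.powersetCard (m - j) (Finset.univ : Finset (Fin m)), ∏ i ∈ S, r i
        = (-1) ^ (m - j - 1) *
            ∑ p ∈ Finset.range (j + 1), ((m + 1).choose p : K) * u ^ ((p : ℤ) - j - 1) := by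
  set Q : K[X] := ∏ i, (X - C (r i)) with hQ
  -- coefficients of Q in terms of elementary symmetric sums
  have hcoeff : ∀ k ≤ m, Q.coeff k =
      (-1) ^ (m - k) * ∑ S ∈ Finset.powersetCard (m - k) (Finset.univ : Finset (Fin m)),
        ∏ i ∈ S, r i := by
    intro k hk
    have : Q = ∏ i, (X + C (-(r i))) := by
      simp [hQ, sub_eq_add_neg]
    rw [this, Finset.prod_X_add_C_coeff (Finset.univ : Finset (Fin m)) (fun i => -(r i))
      (by simpa using hk)]
    simp only [Finset.card_univ, Fintype.card_fin]
    rw [Finset.mul_sum]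
    apply Finset.sum_congr rfl
    intro t ht
    have htc : t.card = m - k := (Finset.mem_powersetCard.mp ht).2
    calc ∏ i ∈ t, -r i = ∏ i ∈ t, (-1) * r i := by simp
      _ = (-1) ^ t.card * ∏ i ∈ t, r i := by
          rw [Finset.prod_mul_distrib, Finset.prod_const]
      _ = (-1) ^ (m - k) * ∏ i ∈ t, r i := by rw [htc]
  -- coefficient of (1+X)^(m+1)
  have hbin : ∀ k, (((1 + X : K[X])) ^ (m + 1)).coeff k = ((m + 1).choose k : K) := by
    intro k
    rw [add_comm (1 : K[X]) X, coeff_X_add_one_pow]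
  -- base relation at k = 0, via evaluation at 0
  have hrel0 : (1 : K) = -u * Q.coeff 0 := by
    have := congrArg (fun p : K[X] => p.eval 0) hr
    simp only [eval_sub, eval_pow, eval_add, eval_one, eval_X, eval_mul, eval_C,
      add_zero, one_pow, zero_pow (by omega : m ≠ 0), mul_zero, sub_zero] at this
    rw [coeff_zero_eq_eval_zero]
    rw [this]
    ring
  -- relation at k+1 < m
  have hrelk : ∀ k, k + 1 < m →
      ((m + 1).choose (k + 1) : K) = Q.coeff k - u * Q.coeff (k + 1) := by
    intro k hk
    have := congrArg (fun p : K[X] => p.coeff (k + 1)) hr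
    simp only [coeff_sub, coeff_C_mul, coeff_X_pow, hbin] at this
    rw [mul_comm (X - C u) Q, coeff_mul_X_sub_C, if_neg (by omega : ¬ k + 1 = m)] at this
    rw [mul_zero, sub_zero] at this
    linear_combination this
  -- key induction
  have key : ∀ j, j < m → u ^ (j + 1) * Q.coeff j
      = -∑ p ∈ Finset.range (j + 1), ((m + 1).choose p : K) * u ^ p := by
    intro j
    induction j with
    | zero =>
      intro _
      simp only [zero_add, Finset.range_one, Finset.sum_singleton, Nat.choose_zero_right,
        Nat.cast_one, pow_zero, mul_one, pow_one]
      linear_combination hrel0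
    | succ j ih =>
      intro hj
      have ihv := ih (by omega)
      have hk := hrelk j hj
      have step : u ^ (j + 1 + 1) * Q.coeff (j + 1)
          = u ^ (j + 1) * Q.coeff j - ((m + 1).choose (j + 1) : K) * u ^ (j + 1) := by
        have h2 : u * Q.coeff (j + 1) = Q.coeff j - ((m + 1).choose (j + 1) : K) := by
          linear_combination hk
        calc u ^ (j + 1 + 1) * Q.coeff (j + 1)
            = u ^ (j + 1) * (u * Q.coeff (j + 1)) := by ring
          _ = u ^ (j + 1) * (Q.coeff j - ((m + 1).choose (j + 1) : K)) := by rw [h2]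
          _ = u ^ (j + 1) * Q.coeff j - ((m + 1).choose (j + 1) : K) * u ^ (j + 1) := by ring
      rw [step, ihv]
      conv_rhs => rw [Finset.sum_range_succ]
      ring
  -- conclude
  intro j hj
  have hQj := hcoeff j (le_of_lt hj)
  have hkey := key j hj
  have hQval : Q.coeff j = -(∑ p ∈ Finset.range (j + 1), ((m + 1).choose p : K) * u ^ p)
      / u ^ (j + 1) := by
    rw [eq_div_iff (pow_ne_zero _ hu)]
    linear_combination hkey
  have hesym : ∑ S ∈ Finset.powersetCard (m - j) (Finset.univ : Finset (Fin m)), ∏ i ∈ S, r i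
      = (-1) ^ (m - j) * Q.coeff j := by
    rw [hQj, ← mul_assoc, ← pow_add, ← two_mul, pow_mul]
    norm_num
  rw [hesym, hQval]
  have hz : ∀ p ∈ Finset.range (j + 1),
      ((m + 1).choose p : K) * u ^ ((p : ℤ) - j - 1)
      = ((m + 1).choose p : K) * u ^ p / u ^ (j + 1) := by
    intro p hp
    have : ((p : ℤ) - j - 1) = (p : ℤ) - ((j + 1 : ℕ) : ℤ) := by push_cast; ring
    rw [this, zpow_sub₀ hu, zpow_natCast, zpow_natCast]
    ring
  rw [Finset.sum_congr rfl hz, ← Finset.sum_div]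
  have hmj : m - j = (m - j - 1) + 1 := by omega
  conv_lhs => rw [hmj, pow_succ]
  ring
end

section
/- The number of lattice paths from (0,0) to (mn, n) using unit north and east steps that never go strictly below the line x = my equals (1/(mn+1)) · binomial((m+1)n, n). -/
/-!
Raney's cycle lemma: if an integer sequence of period `L` sums to `1` over a period, exactly one
of its `L` cyclic shifts has all partial sums of lengths `1, …, L` positive. Weight east steps
by `1` and north steps by `-m`; a word of length `L = (m+1)n + 1` with `n` north steps then has
total weight `1`, and its good shift is an east step followed by an `m`-ballot word. Pairing a
ballot word with a rotation amount therefore gives `L · #ballot = choose L n`, and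
`choose L n · (L - n) = choose (L - 1) n · L` with `L - n = m n + 1` gives the claim.
-/

/-- An `m`-ballot path of size `n`, encoded as a word of `(m+1)*n` steps
(`true` = north step, `false` = east step), read from the start of the path.
The path ends at `(m*n, n)` (so it has `n` north steps), and after each prefix
of `k` steps the current vertex `(x, y)` satisfies `x ≥ m * y`. -/
def IsBallotWord (m n : ℕ) (f : Fin ((m + 1) * n) → Bool) : Prop :=
  (Finset.univ.filter fun i => f i = true).card = n ∧
  ∀ k : ℕ, k ≤ (m + 1) * n →
    m * (Finset.univ.filter fun i : Fin ((m + 1) * n) => (i : ℕ) < k ∧ f i = true).card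
      ≤ (Finset.univ.filter fun i : Fin ((m + 1) * n) => (i : ℕ) < k ∧ f i = false).card

open Finset

section CycleLemma

variable {a : ℕ → ℤ} {L : ℕ}

def IsCycleStart (a : ℕ → ℤ) (L j : ℕ) : Prop :=
  ∀ k ∈ Icc 1 L, 0 < ∑ i ∈ range k, a (j + i)

theorem Function.Periodic.sum_range_add_period (ha : Function.Periodic a L) (k : ℕ) :
    ∑ i ∈ range (k + L), a i = ∑ i ∈ range k, a i + ∑ i ∈ range L, a i := by
  rw [add_comm k, Finset.sum_range_add, add_comm]
  simp only [add_comm L, ha _]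

theorem isCycleStart_iff {j : ℕ} :
    IsCycleStart a L j ↔
      ∀ k ∈ Icc 1 L, ∑ i ∈ range j, a i < ∑ i ∈ range (j + k), a i := by
  simp only [IsCycleStart, sum_range_add, lt_add_iff_pos_right]

theorem Function.Periodic.exists_isCycleStart (ha : Function.Periodic a L) (hL : 0 < L)
    (hsum : 0 < ∑ i ∈ range L, a i) : ∃ j < L, IsCycleStart a L j := by
  set S : ℕ → ℤ := fun k => ∑ i ∈ range k, a i
  obtain ⟨i₀, hi₀, hmin⟩ := (range L).exists_min_image S (nonempty_range_iff.2 hL.ne')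
  -- the last index in `[0, L)` at which the partial sums are minimal
  set j := Nat.findGreatest (fun j => S j = S i₀) (L - 1)
  have hj : S j = S i₀ := Nat.findGreatest_spec (P := fun j => S j = S i₀)
    (Nat.le_sub_one_of_lt (mem_range.1 hi₀)) rfl
  have hjL : j < L := (Nat.findGreatest_le _).trans_lt (by omega)
  have hlast : ∀ i, j < i → i < L → S i₀ < S i := fun i hji hiL =>
    (hmin i (mem_range.2 hiL)).lt_of_ne fun h => Nat.findGreatest_is_greatest hji (by omega) h.symm
  refine ⟨j, hjL, isCycleStart_iff.2 fun k hk => ?_⟩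
  rw [mem_Icc] at hk
  rcases lt_or_ge (j + k) L with h | h
  · change S j < S (j + k)
    exact hj ▸ hlast _ (by omega) h
  · have hwrap := ha.sum_range_add_period (j + k - L)
    rw [Nat.sub_add_cancel h] at hwrap
    calc S j = S i₀ := hj
      _ ≤ S (j + k - L) := hmin _ (mem_range.2 (by omega))
      _ < S (j + k) := by simp only [S] at hwrap ⊢; omega

theorem Function.Periodic.not_isCycleStart_of_lt (ha : Function.Periodic a L)
    (hsum : ∑ i ∈ range L, a i ≤ 1) {i j : ℕ} (hij : i < j) (hji : j < i + L)
    (hi : IsCycleStart a L i) : ¬ IsCycleStart a L j := by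
  -- `S i < S j < S (i + L) = S i + ∑ ≤ S i + 1` leaves no room in `ℤ`
  intro hj
  have h₁ := isCycleStart_iff.1 hi (j - i) (mem_Icc.2 ⟨by omega, by omega⟩)
  have h₂ := isCycleStart_iff.1 hj (i + L - j) (mem_Icc.2 ⟨by omega, by omega⟩)
  rw [Nat.add_sub_cancel' hij.le] at h₁
  rw [Nat.add_sub_cancel' hji.le, ha.sum_range_add_period] at h₂
  omega

theorem Function.Periodic.isCycleStart_unique (ha : Function.Periodic a L)
    (hsum : ∑ i ∈ range L, a i ≤ 1) {i j : ℕ} (hiL : i < L) (hjL : j < L)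
    (hi : IsCycleStart a L i) (hj : IsCycleStart a L j) : i = j := by
  by_contra hne
  rcases Nat.lt_or_gt_of_ne hne with h | h
  · exact ha.not_isCycleStart_of_lt hsum h (by omega) hi hj
  · exact ha.not_isCycleStart_of_lt hsum h (by omega) hj hi

end CycleLemma

theorem sum_filter_val_lt {M : Type*} [AddCommMonoid M] (f : ℕ → M) {N k : ℕ} (hk : k ≤ N) :
    ∑ i : Fin N with i.val < k, f i = ∑ i ∈ range k, f i := by
  refine (sum_map _ Fin.valEmbedding f).symm.trans ?_
  congr 1
  ext i
  simp only [mem_map, mem_filter, mem_univ, true_and, Fin.valEmbedding_apply, mem_range]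
  exact ⟨fun ⟨i, hi, he⟩ => he ▸ hi, fun hi => ⟨⟨i, by omega⟩, hi, rfl⟩⟩

section Words

open Fin.NatCast

/-- An east step is worth `1` and a north step `-m`, so the partial sums along a word are the
values of `x - m * y` at its vertices. -/
def stepValue (m : ℕ) (b : Bool) : ℤ := if b then -m else 1

/-- Read cyclically: the cast `ℕ → Fin (N + 1)` reduces modulo `N + 1`. -/
def stepSeq (m : ℕ) {N : ℕ} (h : Fin (N + 1) → Bool) (i : ℕ) : ℤ := stepValue m (h i)

variable {m N : ℕ}

theorem sum_stepValue {ι : Type*} (s : Finset ι) (w : ι → Bool) :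
    ∑ i ∈ s, stepValue m (w i) = #{i ∈ s | w i = false} - m * #{i ∈ s | w i = true} := by
  simp only [stepValue, sum_ite, sum_const, nsmul_eq_mul, Bool.not_eq_true]
  ring

theorem stepSeq_periodic (h : Fin (N + 1) → Bool) : Function.Periodic (stepSeq m h) (N + 1) := by
  intro i
  simp [stepSeq]

theorem sum_range_stepSeq (h : Fin (N + 1) → Bool) :
    ∑ i ∈ range (N + 1), stepSeq m h i = N + 1 - (m + 1) * #{i | h i = true} := by
  have hcard := card_filter_add_card_filter_not (s := univ) (fun i => h i = true)
  simp only [Bool.not_eq_true, card_univ, Fintype.card_fin] at hcard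
  rw [← Fin.sum_univ_eq_sum_range]
  simp only [stepSeq, Fin.cast_val_eq_self]
  rw [sum_stepValue]
  have hcard' := congrArg (Nat.cast : ℕ → ℤ) hcard
  push_cast at hcard'
  linarith

theorem stepSeq_add (h : Fin (N + 1) → Bool) (j : Fin (N + 1)) (i : ℕ) :
    stepSeq m h (j + i) = stepSeq m (fun x => h (j + x)) i := by
  simp [stepSeq]

theorem isCycleStart_stepSeq_iff (h : Fin (N + 1) → Bool) (j : Fin (N + 1)) :
    IsCycleStart (stepSeq m h) (N + 1) j ↔
      IsCycleStart (stepSeq m fun x => h (j + x)) (N + 1) 0 := by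
  simp only [IsCycleStart, stepSeq_add, zero_add]

theorem card_filter_add_left_eq_true (h : Fin (N + 1) → Bool) (j : Fin (N + 1)) :
    #{i | h (j + i) = true} = #{i | h i = true} :=
  card_equiv (Equiv.addLeft j) (by simp)

theorem card_filter_sub_eq_true (h : Fin (N + 1) → Bool) (j : Fin (N + 1)) :
    #{i | h (i - j) = true} = #{i | h i = true} :=
  card_equiv (Equiv.subRight j) (by simp)

theorem IsCycleStart.cons_false_tail_eq {h : Fin (N + 1) → Bool}
    (hh : IsCycleStart (stepSeq m h) (N + 1) 0) : Fin.cons false (Fin.tail h) = h := by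
  have h0 : h 0 = false := by
    have := hh 1 (by simp)
    cases h0 : h 0
    · rfl
    · simp [stepSeq, stepValue, h0] at this
      omega
  rw [← h0, Fin.cons_self_tail]

theorem sum_range_succ_stepSeq_cons (b : Bool) (w : Fin N → Bool) {k : ℕ} (hk : k ≤ N) :
    ∑ i ∈ range (k + 1), stepSeq m (Fin.cons b w) i =
      stepValue m b + ∑ i : Fin N with i.val < k, stepValue m (w i) := by
  rw [sum_range_succ', add_comm, ← sum_filter_val_lt _ hk]
  congr 1
  refine sum_congr rfl fun i _ => ?_
  have : ((i + 1 : ℕ) : Fin (N + 1)) = i.succ := by ext; simp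
  simp [stepSeq, this]

theorem isCycleStart_stepSeq_cons_false_iff (w : Fin N → Bool) :
    IsCycleStart (stepSeq m (Fin.cons false w)) (N + 1) 0 ↔
      ∀ k ≤ N, 0 ≤ ∑ i : Fin N with i.val < k, stepValue m (w i) := by
  have hshift : ∀ k ≤ N, 0 < ∑ i ∈ range (k + 1), stepSeq m (Fin.cons false w) (0 + i) ↔
      0 ≤ ∑ i : Fin N with i.val < k, stepValue m (w i) := fun k hk => by
    simp only [zero_add, sum_range_succ_stepSeq_cons false w hk, stepValue, Bool.false_eq_true,
      if_false]
    omega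
  constructor
  · exact fun h k hk => (hshift k hk).1 (h (k + 1) (mem_Icc.2 ⟨by omega, by omega⟩))
  · rintro h (_ | k) hk <;> rw [mem_Icc] at hk
    · omega
    · exact (hshift k (by omega)).2 (h k (by omega))

theorem card_filter_cons_false_eq_true (w : Fin N → Bool) :
    #{i | (Fin.cons false w : Fin (N + 1) → Bool) i = true} = #{i | w i = true} := by
  simp only [card_filter, Fin.sum_univ_succ, Fin.cons_zero, Fin.cons_succ]
  simp

end Words

theorem isBallotWord_iff {m n : ℕ} (w : Fin ((m + 1) * n) → Bool) :
    IsBallotWord m n w ↔ #{i | w i = true} = n ∧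
      ∀ k ≤ (m + 1) * n, 0 ≤ ∑ i : Fin ((m + 1) * n) with i.val < k, stepValue m (w i) := by
  refine and_congr Iff.rfl (forall₂_congr fun k _ => ?_)
  rw [sum_stepValue, filter_filter, filter_filter, sub_nonneg]
  norm_cast

section Counting

open scoped Classical

theorem card_filter_card_eq_choose (L n : ℕ) :
    #{h : Fin L → Bool | #{i | h i = true} = n} = L.choose n := by
  conv_rhs => rw [← Fintype.card_fin L, ← card_univ, ← card_powersetCard]
  refine card_nbij' (fun h => ({i | h i = true} : Finset _)) (fun s i => decide (i ∈ s))
    ?_ ?_ ?_ ?_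
  · intro h; simp [mem_powersetCard]
  · intro s; simp [mem_powersetCard]
  · intro h _; funext i; simp
  · intro s _; ext i; simp

variable {m n : ℕ}

theorem sum_range_stepSeq_of_card_eq {h : Fin ((m + 1) * n + 1) → Bool}
    (hh : #{i | h i = true} = n) : ∑ i ∈ range ((m + 1) * n + 1), stepSeq m h i = 1 := by
  rw [sum_range_stepSeq, hh]
  push_cast
  ring

theorem isCycleStart_stepSeq_sub_iff {N : ℕ} (g : Fin (N + 1) → Bool) (j : Fin (N + 1)) :
    IsCycleStart (stepSeq m fun i => g (i - j)) (N + 1) j ↔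
      IsCycleStart (stepSeq m g) (N + 1) 0 := by
  rw [isCycleStart_stepSeq_iff]
  simp

theorem card_filter_card_eq_mul_card_isCycleStart :
    #{h : Fin ((m + 1) * n + 1) → Bool | #{i | h i = true} = n} =
      ((m + 1) * n + 1) * #{h : Fin ((m + 1) * n + 1) → Bool |
        #{i | h i = true} = n ∧ IsCycleStart (stepSeq m h) ((m + 1) * n + 1) 0} := by
  conv_rhs => enter [1]; rw [← card_fin ((m + 1) * n + 1)]
  rw [← card_product]
  symm
  refine card_bij (fun p _ i => p.2 (i - p.1)) ?_ ?_ ?_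
  · rintro ⟨j, g⟩ hg
    simp only [mem_product, mem_univ, mem_filter, true_and] at hg ⊢
    rw [card_filter_sub_eq_true, hg.1]
  · rintro ⟨j, g⟩ hg ⟨j', g'⟩ hg' hgg'
    simp only [mem_product, mem_univ, mem_filter, true_and] at hg hg'
    set h := fun i => g (i - j)
    have hj : IsCycleStart (stepSeq m h) ((m + 1) * n + 1) j :=
      (isCycleStart_stepSeq_sub_iff g j).2 hg.2
    have hj' : IsCycleStart (stepSeq m h) ((m + 1) * n + 1) j' := by
      simp only [h, hgg']
      exact (isCycleStart_stepSeq_sub_iff g' j').2 hg'.2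
    have hcard : #{i | h i = true} = n := by
      rw [card_filter_sub_eq_true, hg.1]
    have hjj' : j = j' := Fin.ext <| (stepSeq_periodic h).isCycleStart_unique
      (sum_range_stepSeq_of_card_eq hcard).le j.isLt j'.isLt hj hj'
    subst hjj'
    refine Prod.ext rfl (funext fun x => ?_)
    simpa [h] using congrFun hgg' (x + j)
  · intro h hh
    simp only [mem_filter, mem_univ, true_and] at hh
    obtain ⟨j, hjL, hj⟩ := (stepSeq_periodic h).exists_isCycleStart (by positivity)
      (sum_range_stepSeq_of_card_eq hh).ge
    refine ⟨(⟨j, hjL⟩, fun x => h (⟨j, hjL⟩ + x)), ?_, funext fun i => by simp⟩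
    simp only [mem_product, mem_univ, mem_filter, true_and]
    exact ⟨(card_filter_add_left_eq_true h _).trans hh,
      (isCycleStart_stepSeq_iff h ⟨j, hjL⟩).1 hj⟩

theorem card_isBallotWord :
    #{w : Fin ((m + 1) * n) → Bool | IsBallotWord m n w} =
      #{h : Fin ((m + 1) * n + 1) → Bool |
        #{i | h i = true} = n ∧ IsCycleStart (stepSeq m h) ((m + 1) * n + 1) 0} := by
  refine card_nbij' (fun w => (Fin.cons false w : Fin _ → Bool)) Fin.tail ?_ ?_ ?_ ?_
  · intro w hw
    simp only [coe_filter, mem_univ, true_and, Set.mem_ofPred_eq, isBallotWord_iff] at hw ⊢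
    rw [card_filter_cons_false_eq_true, isCycleStart_stepSeq_cons_false_iff]
    exact hw
  · intro h hh
    simp only [coe_filter, mem_univ, true_and, Set.mem_ofPred_eq, isBallotWord_iff] at hh ⊢
    obtain ⟨hcard, hstart⟩ := hh
    rw [← hstart.cons_false_tail_eq] at hcard hstart
    rw [card_filter_cons_false_eq_true] at hcard
    rw [isCycleStart_stepSeq_cons_false_iff] at hstart
    exact ⟨hcard, hstart⟩
  · intro w _
    exact Fin.tail_cons _ _
  · intro h hh
    simp only [coe_filter, mem_univ, true_and, Set.mem_ofPred_eq] at hh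
    exact hh.2.cons_false_tail_eq

end Counting

open scoped Classical in
theorem stmt_7_general (m n : ℕ) :
    (m * n + 1) *
      (Finset.univ.filter fun f : Fin ((m + 1) * n) → Bool => IsBallotWord m n f).card
      = Nat.choose ((m + 1) * n) n := by
  have hcount : ((m + 1) * n + 1) * #{w : Fin ((m + 1) * n) → Bool | IsBallotWord m n w} =
      ((m + 1) * n + 1).choose n := by
    rw [card_isBallotWord, ← card_filter_card_eq_mul_card_isCycleStart,
      card_filter_card_eq_choose]
  have hsub : (m + 1) * n + 1 - n = m * n + 1 := by rw [add_one_mul]; omega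
  apply Nat.eq_of_mul_eq_mul_right (by positivity : 0 < (m + 1) * n + 1)
  rw [Nat.choose_mul_succ_eq, hsub, ← hcount]
  ring

open scoped Classical in
theorem stmt_7 (m n : ℕ) (hm : 1 ≤ m) :
    (m * n + 1) *
      (Finset.univ.filter fun f : Fin ((m + 1) * n) → Bool => IsBallotWord m n f).card
      = Nat.choose ((m + 1) * n) n :=
  stmt_7_general m n
end

section
/- For m ≥ 1 and n ≥ 1, the number of functions f from {1,...,n} to the positive integers such that, when the values f(1),...,f(n) are sorted into increasing order b_1 ≤ b_2 ≤ ... ≤ b_n, we have b_i ≤ 1 + m(i-1) for all i, equals (mn+1)^{n-1}. -/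
/-!
Subtracting `1` identifies these parking functions with the maps `u : Fin n → ZMod (m * n + 1)`
whose residues keep the path `t ↦ m * #{j | u j < t} - t` nonnegative on `[1, m * n]`.
Adding a constant to all values rotates this path cyclically, and since it ends at height `-1`,
exactly one rotation stays nonnegative: the one starting at the first global minimum (Pollak's
cycle lemma). So each of the `(m * n + 1) ^ (n - 1)` orbits of the `(m * n + 1) ^ n` maps
contains exactly one parking function.
-/

/-- `f : Fin n → ℕ` is a `(1, m, m, …, m)`-parking function of size `n`:
its values are positive, and when sorted into increasing order
`b 0 ≤ b 1 ≤ ⋯ ≤ b (n-1)` they satisfy `b i ≤ 1 + m * i`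
(i.e. the `i`-th smallest value, 1-indexed, is at most `1 + m * (i - 1)`). -/
def IsGenParkingFunction (m n : ℕ) (f : Fin n → ℕ) : Prop :=
  (∀ j, 1 ≤ f j) ∧
  ∃ σ : Equiv.Perm (Fin n),
    Monotone (f ∘ σ) ∧ ∀ i : Fin n, f (σ i) ≤ 1 + m * (i : ℕ)

open Finset

theorem exists_perm_monotone_comp_and_le_iff {α : Type*} [LinearOrder α] {n : ℕ}
    (f b : Fin n → α) :
    (∃ σ : Equiv.Perm (Fin n), Monotone (f ∘ σ) ∧ ∀ i, f (σ i) ≤ b i) ↔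
      ∀ k : Fin n, (k : ℕ) + 1 ≤ #{j | f j ≤ b k} := by
  constructor
  · rintro ⟨σ, hmono, hb⟩ k
    have hsub : (Iic k).map σ.toEmbedding ⊆ ({j | f j ≤ b k} : Finset _) := by
      simp only [subset_iff, mem_map_equiv, mem_Iic, mem_filter_univ]
      intro j hj
      simpa using (hmono hj).trans (hb k)
    simpa using card_le_card hsub
  · intro hcount
    refine ⟨Tuple.sort f, Tuple.monotone_sort f, fun i => ?_⟩
    by_contra! hlt
    have hsub : ({j | f j ≤ b i} : Finset _) ⊆ (Iio i).map (Tuple.sort f).toEmbedding := by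
      simp only [subset_iff, mem_map_equiv, mem_Iio, mem_filter_univ]
      intro j hj
      by_contra! hge
      have := Tuple.monotone_sort f hge
      simp only [Function.comp_apply, Equiv.apply_symm_apply] at this
      exact absurd (hlt.trans_le this) hj.not_gt
    have hle := card_le_card hsub
    rw [card_map, Fin.card_Iio] at hle
    exact absurd (hcount i) (by omega)

theorem forall_succ_le_iff_forall_le_mul {m n : ℕ} {c : ℕ → ℕ} (hc : Monotone c) (hm : 1 ≤ m) :
    (∀ k < n, k + 1 ≤ c (m * k + 1)) ↔ ∀ t ∈ Icc 1 (m * n), t ≤ m * c t := by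
  simp only [mem_Icc]
  constructor
  · rintro h t ⟨ht₁, ht₂⟩
    obtain ⟨k, r, hr, hkr⟩ : ∃ k r, r < m ∧ t - 1 = m * k + r :=
      ⟨_, _, Nat.mod_lt _ (by omega), (Nat.div_add_mod _ _).symm⟩
    have hk : m * k + 1 ≤ t ∧ t ≤ m * (k + 1) := by
      rw [mul_add, mul_one]
      omega
    have hkn : k < n := by
      by_contra! hnk
      nlinarith [Nat.mul_le_mul_left m hnk]
    calc t ≤ m * (k + 1) := hk.2
      _ ≤ m * c t := Nat.mul_le_mul_left m ((h k hkn).trans (hc hk.1))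
  · intro h k hk
    have := h (m * k + 1) ⟨by omega, by nlinarith⟩
    by_contra! hlt
    nlinarith

def IsFirstArgminOn {β : Type*} [LinearOrder β] (h : ℕ → β) (s : Finset ℕ) (d : ℕ) : Prop :=
  d ∈ s ∧ (∀ x ∈ s, h d ≤ h x) ∧ ∀ x ∈ s, x < d → h d < h x

theorem existsUnique_isFirstArgminOn {β : Type*} [LinearOrder β] (h : ℕ → β) {s : Finset ℕ}
    (hs : s.Nonempty) : ∃! d, IsFirstArgminOn h s d := by
  classical
  have hmin := s.exists_min_image h hs
  obtain ⟨hd, hdmin⟩ := Nat.find_spec hmin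
  refine ⟨Nat.find hmin, ⟨hd, hdmin, fun x hx hlt => ?_⟩, ?_⟩
  · refine lt_of_not_ge fun hle => Nat.find_min hmin hlt ⟨hx, fun y hy => ?_⟩
    exact hle.trans (hdmin y hy)
  · rintro d ⟨hds, hdle, hdlt⟩
    rcases lt_trichotomy d (Nat.find hmin) with hlt | heq | hgt
    · exact (Nat.find_min hmin hlt ⟨hds, hdle⟩).elim
    · exact heq
    · exact absurd (hdmin d hds) (hdlt _ hd hgt).not_ge

namespace GenParkingFunction

section CountBelow

variable {N n : ℕ}

def countBelow (u : Fin n → ZMod N) (t : ℕ) : ℕ := #{j | (u j).val < t}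

theorem countBelow_mono (u : Fin n → ZMod N) : Monotone (countBelow u) :=
  fun _ _ hab => card_le_card (monotone_filter_right _ fun _ _ hj => hj.trans_le hab)

theorem countBelow_zero (u : Fin n → ZMod N) : countBelow u 0 = 0 := by
  simp [countBelow]

theorem countBelow_of_le [NeZero N] (u : Fin n → ZMod N) {t : ℕ} (ht : N ≤ t) :
    countBelow u t = n := by
  simp [countBelow, fun j => (ZMod.val_lt (u j)).trans_le ht]

theorem val_add_natCast_sub [NeZero N] (x : ZMod N) {d : ℕ} (hd : d ≤ N) :
    (x + ((N - d : ℕ) : ZMod N)).val = if d ≤ x.val then x.val - d else x.val + N - d := by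
  have hx := ZMod.val_lt x
  rw [ZMod.val_add, ZMod.val_natCast, Nat.add_mod_mod]
  split_ifs with h
  · rw [show x.val + (N - d) = x.val - d + N by omega, Nat.add_mod_right,
      Nat.mod_eq_of_lt (by omega)]
  · rw [Nat.mod_eq_of_lt (by omega)]
    omega

/-- Rotating the values by `-d` moves the window `[0, t)` to `[d, d + t)`, read modulo `N`. -/
theorem countBelow_add_natCast_sub [NeZero N] (v : Fin n → ZMod N) {d t : ℕ} (hd : d ≤ N)
    (ht : t ≤ N) :
    countBelow (fun j => v j + ((N - d : ℕ) : ZMod N)) t + countBelow v d =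
      countBelow v (d + t) + countBelow v (d + t - N) := by
  simp only [countBelow, card_filter, ← sum_add_distrib, val_add_natCast_sub _ hd]
  refine sum_congr rfl fun j _ => ?_
  have := ZMod.val_lt (v j)
  split_ifs <;> omega

end CountBelow

variable {m n : ℕ}

def IsParking (m : ℕ) (u : Fin n → ZMod (m * n + 1)) : Prop :=
  ∀ t ∈ Icc 1 (m * n), t ≤ m * countBelow u t

def height (m : ℕ) (u : Fin n → ZMod (m * n + 1)) (t : ℕ) : ℤ := m * countBelow u t - t

theorem isParking_iff_height_nonneg (u : Fin n → ZMod (m * n + 1)) :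
    IsParking m u ↔ ∀ t ∈ Icc 1 (m * n), 0 ≤ height m u t := by
  simp only [IsParking, height, sub_nonneg]
  exact forall₂_congr fun _ _ => by norm_cast

-- The `- 1` on wrapping around is `height m v (m * n + 1) = m * n - (m * n + 1)`.
theorem height_add_natCast_sub (v : Fin n → ZMod (m * n + 1)) {d t : ℕ} (hd : d ≤ m * n + 1)
    (ht : t ≤ m * n + 1) :
    height m (fun j => v j + ((m * n + 1 - d : ℕ) : ZMod (m * n + 1))) t =
      if d + t ≤ m * n + 1 then height m v (d + t) - height m v d
      else height m v (d + t - (m * n + 1)) - height m v d - 1 := by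
  have hshift := countBelow_add_natCast_sub v hd ht
  unfold height
  split_ifs with h
  · rw [Nat.sub_eq_zero_of_le h, countBelow_zero] at hshift
    zify at hshift
    push_cast
    linear_combination (m : ℤ) * hshift
  · rw [countBelow_of_le v (by omega : m * n + 1 ≤ d + t)] at hshift
    zify at hshift
    push_cast [Nat.cast_sub (by omega : m * n + 1 ≤ d + t)]
    linear_combination (m : ℤ) * hshift

theorem isParking_add_natCast_sub_iff (v : Fin n → ZMod (m * n + 1)) {d : ℕ}
    (hd : d ∈ Icc 1 (m * n + 1)) :
    IsParking m (fun j => v j + ((m * n + 1 - d : ℕ) : ZMod (m * n + 1))) ↔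
      IsFirstArgminOn (height m v) (Icc 1 (m * n + 1)) d := by
  rw [mem_Icc] at hd
  simp only [isParking_iff_height_nonneg, IsFirstArgminOn, mem_Icc]
  constructor
  · intro h
    have hlt : ∀ x, 1 ≤ x ∧ x ≤ m * n + 1 → x < d → height m v d < height m v x := by
      intro x hx hxd
      have := h (x + (m * n + 1) - d) (by omega)
      rw [height_add_natCast_sub v hd.2 (by omega), if_neg (by omega),
        show d + (x + (m * n + 1) - d) - (m * n + 1) = x by omega] at this
      linarith
    refine ⟨hd, fun x hx => ?_, hlt⟩
    rcases lt_trichotomy x d with hxd | rfl | hdx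
    · exact (hlt x hx hxd).le
    · rfl
    · have := h (x - d) (by omega)
      rw [height_add_natCast_sub v hd.2 (by omega), if_pos (by omega),
        show d + (x - d) = x by omega] at this
      linarith
  · rintro ⟨-, hle, hlt⟩ t ht
    rw [height_add_natCast_sub v hd.2 (by omega)]
    split_ifs with hdt
    · linarith [hle (d + t) (by omega)]
    · linarith [hlt (d + t - (m * n + 1)) (by omega) (by omega)]

theorem existsUnique_isParking_add (v : Fin n → ZMod (m * n + 1)) :
    ∃! c : ZMod (m * n + 1), IsParking m (fun j => v j + c) := by
  have hc (c : ZMod (m * n + 1)) : c = ((m * n + 1 - (m * n + 1 - c.val) : ℕ) : ZMod _) := by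
    rw [Nat.sub_sub_self (ZMod.val_lt c).le, ZMod.natCast_zmod_val]
  obtain ⟨d, hd, huniq⟩ :=
    existsUnique_isFirstArgminOn (height m v) (nonempty_Icc.2 (by omega : 1 ≤ m * n + 1))
  refine ⟨_, (isParking_add_natCast_sub_iff v hd.1).2 hd, fun c hpark => ?_⟩
  have hmem : m * n + 1 - c.val ∈ Icc 1 (m * n + 1) :=
    mem_Icc.2 ⟨by have := ZMod.val_lt c; omega, by omega⟩
  rw [hc c] at hpark ⊢
  rw [huniq _ ((isParking_add_natCast_sub_iff v hmem).1 hpark)]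

theorem bijective_isParking_add :
    Function.Bijective fun p : {u : Fin n → ZMod (m * n + 1) // IsParking m u} ×
      ZMod (m * n + 1) => fun j => p.1.1 j + p.2 := by
  constructor
  · rintro ⟨⟨u, hu⟩, c⟩ ⟨⟨u', hu'⟩, c'⟩ h
    have h (j : Fin n) : u j + c = u' j + c' := congrFun h j
    obtain ⟨_, -, huniq⟩ := existsUnique_isParking_add fun j => u j + c
    have hcc : c = c' := by
      have h₁ := huniq (-c) (by simpa using hu)
      have h₂ := huniq (-c') (by simpa [h] using hu')
      exact neg_injective (h₁.trans h₂.symm)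
    subst hcc
    have huu : u = u' := funext fun j => add_right_cancel (h j)
    subst huu
    rfl
  · intro v
    obtain ⟨c, hc, -⟩ := existsUnique_isParking_add v
    exact ⟨(⟨_, hc⟩, -c), by simp⟩

theorem card_isParking :
    Nat.card {u : Fin n → ZMod (m * n + 1) // IsParking m u} = (m * n + 1) ^ (n - 1) := by
  have h := Nat.card_congr (Equiv.ofBijective _ (bijective_isParking_add (m := m) (n := n)))
  rw [Nat.card_prod, Nat.card_fun, Nat.card_zmod, Nat.card_fin] at h
  rcases n with _ | n
  · simpa using h
  · rw [pow_succ] at h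
    exact Nat.eq_of_mul_eq_mul_right (Nat.succ_pos _) h

theorem isGenParkingFunction_val_add_one_iff (hm : 1 ≤ m) (u : Fin n → ZMod (m * n + 1)) :
    IsGenParkingFunction m n (fun j => (u j).val + 1) ↔ IsParking m u := by
  have hcount (k : ℕ) : #{j | (u j).val + 1 ≤ 1 + m * k} = countBelow u (m * k + 1) :=
    congrArg card (filter_congr fun j _ => by omega)
  rw [IsGenParkingFunction, exists_perm_monotone_comp_and_le_iff, IsParking,
    ← forall_succ_le_iff_forall_le_mul (countBelow_mono u) hm]
  simp only [hcount, Nat.le_add_left, implies_true, true_and]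
  exact Fin.forall_iff

theorem exists_val_add_one_eq {f : Fin n → ℕ} (hf : IsGenParkingFunction m n f) :
    ∃ u : Fin n → ZMod (m * n + 1), (fun j => (u j).val + 1) = f := by
  obtain ⟨hpos, σ, -, hle⟩ := hf
  refine ⟨fun j => ((f j - 1 : ℕ) : ZMod (m * n + 1)), funext fun j => ?_⟩
  have hj := hle (σ.symm j)
  rw [Equiv.apply_symm_apply] at hj
  have := Nat.mul_le_mul_left m (σ.symm j).is_lt.le
  have := hpos j
  rw [ZMod.val_cast_of_lt (by omega)]
  omega

theorem setOf_isGenParkingFunction_eq_image (hm : 1 ≤ m) :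
    {f | IsGenParkingFunction m n f} =
      (fun u j => (u j).val + 1) '' {u : Fin n → ZMod (m * n + 1) | IsParking m u} := by
  ext f
  constructor
  · intro hf
    obtain ⟨u, rfl⟩ := exists_val_add_one_eq hf
    exact ⟨u, (isGenParkingFunction_val_add_one_iff hm u).1 hf, rfl⟩
  · rintro ⟨u, hu, rfl⟩
    exact (isGenParkingFunction_val_add_one_iff hm u).2 hu

theorem val_add_one_injective :
    Function.Injective fun (u : Fin n → ZMod (m * n + 1)) j => (u j).val + 1 :=
  fun _ _ h => funext fun j => ZMod.val_injective _ (Nat.add_right_cancel (congrFun h j))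

end GenParkingFunction

theorem stmt_8_general (m n : ℕ) (hm : 1 ≤ m) :
    {f : Fin n → ℕ | IsGenParkingFunction m n f}.ncard = (m * n + 1) ^ (n - 1) := by
  rw [GenParkingFunction.setOf_isGenParkingFunction_eq_image hm,
    Set.ncard_image_of_injective _ GenParkingFunction.val_add_one_injective,
    ← Nat.card_coe_set_eq, ← GenParkingFunction.card_isParking]
  rfl

theorem stmt_8 (m n : ℕ) (hm : 1 ≤ m) (hn : 1 ≤ n) :
    {f : Fin n → ℕ | IsGenParkingFunction m n f}.ncard = (m * n + 1) ^ (n - 1) :=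
  stmt_8_general m n hm
end

section
/- Let m ≥ 1 and let z be a formal variable. Define the formal power series F(t) in t implicitly by the substitution t = z·exp(-m(m+1)z) applied to (1 - mz)·exp((m+1)z). Then for all n ≥ 1, n! times the coefficient of t^n in F equals (m+1)^n (mn+1)^{n-2}. -/
open PowerSeries

/-- The exponential `exp f` of a formal power series `f` with zero constant term:
`coeff n (exp f) = ∑_{k ≤ n} coeff n (f^k) / k!` (all higher terms vanish since
`f^k` has valuation `≥ k`). -/
noncomputable def pexp (f : PowerSeries ℚ) : PowerSeries ℚ :=
  PowerSeries.mk fun n =>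
    ∑ k ∈ Finset.range (n + 1), ((k.factorial : ℚ))⁻¹ * PowerSeries.coeff (R := ℚ) n (f ^ k)

/-!
Write `E c = exp (c z)`. Differentiating `z = X E a` gives `z' E c = E (a + c) + a X z' E (a + c)`,
and `(E c)' = c z' E c`; together these recurrences yield Abel's formula
`n! [Xⁿ] E c = c (c + a n)ⁿ⁻¹`. With `a = m (m + 1)` we have `z E (m + 1) = X E ((m + 1)²)`, so
`n! [Xⁿ] F` is a difference of two Abel terms sharing the factor `(m + 1)ⁿ (m n + 1)ⁿ⁻²`.
-/

open Nat

section Exp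

variable {f : ℚ⟦X⟧}

theorem coeff_pow_eq_zero_of_lt (hf : constantCoeff f = 0) {n k : ℕ} (h : n < k) :
    coeff n (f ^ k) = 0 :=
  coeff_of_lt_order _ ((Nat.cast_lt.2 h).trans_le (le_order_pow_of_constantCoeff_eq_zero k hf))

theorem pexp_eq_subst_exp (hf : constantCoeff f = 0) : pexp f = (exp ℚ).subst f := by
  ext n
  rw [coeff_subst' (HasSubst.of_constantCoeff_zero' hf),
    finsum_eq_sum_of_support_subset (s := Finset.range (n + 1))]
  · simp [pexp, coeff_exp]
  · intro k hk
    by_contra hkn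
    exact hk (by simp [coeff_pow_eq_zero_of_lt hf (not_lt.1 (mt Finset.mem_range.2 hkn))])

theorem constantCoeff_pexp : constantCoeff (pexp f) = 1 := by
  rw [← coeff_zero_eq_constantCoeff_apply]
  simp [pexp]

theorem derivative_pexp (hf : constantCoeff f = 0) :
    d⁄dX ℚ (pexp f) = pexp f * d⁄dX ℚ f := by
  rw [pexp_eq_subst_exp hf, derivative_subst (HasSubst.of_constantCoeff_zero' hf), derivative_exp]

theorem pexp_smul_mul_pexp_smul (hf : constantCoeff f = 0) (a b : ℚ) :
    pexp (a • f) * pexp (b • f) = pexp ((a + b) • f) := by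
  have hsub : HasSubst f := HasSubst.of_constantCoeff_zero' hf
  have hrescale : ∀ c : ℚ, pexp (c • f) = (rescale c (exp ℚ)).subst f := fun c => by
    rw [pexp_eq_subst_exp (by simp [hf]), rescale_eq_subst,
      subst_comp_subst_apply (HasSubst.smul_X' c) hsub, subst_smul hsub, subst_X hsub]
  rw [hrescale, hrescale, hrescale, ← subst_mul hsub, exp_mul_exp_eq_exp_add]

end Exp

section Abel

variable {a : ℚ} {z : ℚ⟦X⟧}

theorem coeff_succ_pexp_smul_mul_succ (hz0 : constantCoeff z = 0) (c : ℚ) (n : ℕ) :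
    coeff (n + 1) (pexp (c • z)) * (n + 1) = c * coeff n (d⁄dX ℚ z * pexp (c • z)) := by
  rw [← coeff_derivative, derivative_pexp (by simp [hz0]), Derivation.map_smul, mul_smul_comm,
    coeff_smul, smul_eq_mul, mul_comm (pexp _)]

theorem derivative_mul_pexp_smul (hz : z = X * pexp (a • z)) (c : ℚ) :
    d⁄dX ℚ z * pexp (c • z) = pexp ((a + c) • z) + a • (X * (d⁄dX ℚ z * pexp ((a + c) • z))) := by
  have hz0 : constantCoeff z = 0 := X_dvd_iff.mp ⟨_, hz⟩
  have hdz : d⁄dX ℚ z = pexp (a • z) + a • (X * (d⁄dX ℚ z * pexp (a • z))) := by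
    conv_lhs => rw [hz]
    rw [Derivation.leibniz, derivative_pexp (by simp [hz0]), Derivation.map_smul, derivative_X,
      smul_eq_mul, smul_eq_mul, mul_one, mul_smul_comm, mul_smul_comm, add_comm,
      mul_comm (pexp _) (d⁄dX ℚ z)]
  calc d⁄dX ℚ z * pexp (c • z)
      = pexp (a • z) * pexp (c • z) + a • (X * (d⁄dX ℚ z * (pexp (a • z) * pexp (c • z)))) := by
        conv_lhs => rw [hdz]
        simp only [add_mul, smul_mul_assoc, mul_assoc]
    _ = _ := by rw [pexp_smul_mul_pexp_smul hz0]

theorem factorial_mul_coeff_derivative_mul_pexp_smul (hz : z = X * pexp (a • z)) (n : ℕ)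
    (c : ℚ) : n ! * coeff n (d⁄dX ℚ z * pexp (c • z)) = (c + a * (n + 1)) ^ n := by
  induction n generalizing c with
  | zero =>
    rw [derivative_mul_pexp_smul hz, map_add, coeff_zero_eq_constantCoeff_apply,
      coeff_zero_eq_constantCoeff_apply]
    simp [constantCoeff_pexp]
  | succ n ih =>
    have hE := coeff_succ_pexp_smul_mul_succ (X_dvd_iff.mp ⟨_, hz⟩) (a + c) n
    rw [derivative_mul_pexp_smul hz, map_add, coeff_smul, coeff_succ_X_mul, smul_eq_mul]
    calc ((n + 1)! : ℚ) * (coeff (n + 1) (pexp ((a + c) • z))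
          + a * coeff n (d⁄dX ℚ z * pexp ((a + c) • z)))
        = (a + c + a * (n + 1)) * (n ! * coeff n (d⁄dX ℚ z * pexp ((a + c) • z))) := by
          rw [factorial_succ]
          push_cast
          linear_combination (n ! : ℚ) * hE
      _ = _ := by
        rw [ih]
        push_cast
        ring

theorem factorial_mul_coeff_succ_pexp_smul (hz : z = X * pexp (a • z)) (n : ℕ) (c : ℚ) :
    (n + 1)! * coeff (n + 1) (pexp (c • z)) = c * (c + a * (n + 1)) ^ n := by
  rw [← factorial_mul_coeff_derivative_mul_pexp_smul hz, factorial_succ, ← mul_left_comm,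
    ← coeff_succ_pexp_smul_mul_succ (X_dvd_iff.mp ⟨_, hz⟩)]
  push_cast
  ring

theorem one_sub_smul_mul_pexp_smul (hz : z = X * pexp (a • z)) (b c : ℚ) :
    (1 - b • z) * pexp (c • z) = pexp (c • z) - b • (X * pexp ((a + c) • z)) := by
  have hzE : z * pexp (c • z) = X * pexp ((a + c) • z) := by
    nth_rewrite 1 [hz]
    rw [mul_assoc, pexp_smul_mul_pexp_smul (X_dvd_iff.mp ⟨_, hz⟩)]
  rw [sub_mul, one_mul, smul_mul_assoc, hzE]

end Abel

theorem factorial_mul_coeff_add_two_one_sub_smul_mul_pexp_smul {m : ℕ} {z : ℚ⟦X⟧}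
    (hz : z = X * pexp ((m * (m + 1) : ℚ) • z)) (j : ℕ) :
    ((j + 2)! : ℚ) * coeff (j + 2) ((1 - (m : ℚ) • z) * pexp ((m + 1 : ℚ) • z))
      = (m + 1) ^ (j + 2) * (m * (j + 2) + 1) ^ j := by
  set B : ℚ := m * (j + 2) + 1 with hB
  have h1 : ((j + 2)! : ℚ) * coeff (j + 2) (pexp ((m + 1 : ℚ) • z))
      = (m + 1) ^ (j + 2) * B ^ (j + 1) := by
    rw [factorial_mul_coeff_succ_pexp_smul hz,
      show (m + 1 + m * (m + 1) * ((j + 1 : ℕ) + 1) : ℚ) = (m + 1) * B by push_cast; ring, mul_pow]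
    ring
  have h2 : ((j + 1)! : ℚ) * coeff (j + 1) (pexp ((m * (m + 1) + (m + 1) : ℚ) • z))
      = (m + 1) ^ (j + 2) * B ^ j := by
    rw [factorial_mul_coeff_succ_pexp_smul hz,
      show (m * (m + 1) + (m + 1) + m * (m + 1) * (j + 1) : ℚ) = (m + 1) * B by ring,
      show (m * (m + 1) + (m + 1) : ℚ) = (m + 1) ^ 2 by ring, mul_pow]
    ring
  rw [one_sub_smul_mul_pexp_smul hz, map_sub, coeff_smul, coeff_succ_X_mul, smul_eq_mul,
    factorial_succ (j + 1)]
  rw [factorial_succ (j + 1)] at h1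
  push_cast at h1 h2 ⊢
  linear_combination h1 - (m : ℚ) * (j + 2) * h2 + (m + 1 : ℚ) ^ (j + 2) * B ^ j * hB

theorem stmt_9_general (m : ℕ) (z : PowerSeries ℚ)
    (hz : z = PowerSeries.X * pexp (((m * (m + 1) : ℕ) : ℚ) • z)) :
    ∀ n : ℕ, 1 ≤ n →
      (n.factorial : ℚ) *
          PowerSeries.coeff (R := ℚ) n ((1 - (m : ℚ) • z) * pexp ((((m : ℚ) + 1)) • z))
        = ((m : ℚ) + 1) ^ n * ((m * n + 1 : ℕ) : ℚ) ^ ((n : ℤ) - 2) := by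
  replace hz : z = X * pexp ((m * (m + 1) : ℚ) • z) := by exact_mod_cast hz
  rintro (_ | _ | j) hn
  · omega
  · have h1 := factorial_mul_coeff_succ_pexp_smul hz 0 (m + 1)
    rw [one_sub_smul_mul_pexp_smul hz, map_sub, coeff_smul, coeff_succ_X_mul,
      coeff_zero_eq_constantCoeff_apply, constantCoeff_pexp, smul_eq_mul,
      show ((0 + 1 : ℕ) : ℤ) - 2 = -1 by rfl, zpow_neg_one]
    push_cast at h1 ⊢
    field_simp
    linear_combination h1
  · rw [show ((j + 1 + 1 : ℕ) : ℤ) - 2 = j by push_cast; ring, zpow_natCast,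
      factorial_mul_coeff_add_two_one_sub_smul_mul_pexp_smul hz]
    push_cast
    ring

theorem stmt_9 (m : ℕ) (hm : 1 ≤ m) (z : PowerSeries ℚ)
    (hz0 : PowerSeries.constantCoeff (R := ℚ) z = 0)
    (hz : z = PowerSeries.X * pexp (((m * (m + 1) : ℕ) : ℚ) • z)) :
    ∀ n : ℕ, 1 ≤ n →
      (n.factorial : ℚ) *
          PowerSeries.coeff (R := ℚ) n ((1 - (m : ℚ) • z) * pexp ((((m : ℚ) + 1)) • z))
        = ((m : ℚ) + 1) ^ n * ((m * n + 1 : ℕ) : ℚ) ^ ((n : ℤ) - 2) :=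
  stmt_9_general m z hz
end

section
/- For indeterminates a_1, ..., a_m and integers 1 ≤ k ≤ j ≤ m, the sum over all k-element subsets V of {1,...,m} of the complete homogeneous symmetric polynomial h_{j-k+1} evaluated at the variables indexed by V equals the sum over partitions λ of j-k+1 of binomial(m - ℓ(λ), k - ℓ(λ)) times the monomial symmetric polynomial m_λ(a_1, ..., a_m), where ℓ(λ) is the number of parts of λ. -/
/-- The complete homogeneous symmetric polynomial `h_r` evaluated at the family `a`. -/
def hsym {R : Type*} [CommSemiring R] {ι : Type*} [Fintype ι] [DecidableEq ι]
    (r : ℕ) (a : ι → R) : R :=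
  ∑ s : Sym ι r, (s.val.map a).prod

/-- The monomial symmetric polynomial `m_λ` (for `λ` a partition of `r`)
evaluated at `a_1, …, a_m`: the sum of all distinct monomials in the `a_i`
whose multiset of (nonzero) exponents equals the multiset of parts of `λ`. -/
def msym {R : Type*} [CommSemiring R] {m r : ℕ} (lam : Nat.Partition r)
    (a : Fin m → R) : R :=
  ∑ f ∈ (Finset.univ : Finset (Fin m → Fin (r + 1))).filter
      (fun f => Multiset.filter (fun x => x ≠ 0)
          (Multiset.map (fun i => ((f i : ℕ))) Finset.univ.val) = lam.parts),
    ∏ i, a i ^ ((f i : ℕ))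


/-!
Expand `h_r(a_V)` as the sum of all degree-`r` monomials supported in `V` and exchange the
two sums: a monomial with support `T` is counted once for every `k`-subset `V ⊇ T`, that is
`C(m - |T|, k - |T|)` times when `|T| ≤ k` and never otherwise. Grouping the monomials by the
partition formed by their nonzero exponents, whose length is `|T|`, yields the `m_λ`.
-/

open Finset

noncomputable def Sym.equivFinNatSum (ι : Type*) [Fintype ι] [DecidableEq ι] (r : ℕ) :
    Sym ι r ≃ {f : ι → Fin (r + 1) // ∑ i, (f i : ℕ) = r} :=
  (Sym.equivNatSumOfFintype ι r).trans
    { toFun := fun P => ⟨fun i => ⟨P.1 i, Nat.lt_succ_of_le <|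
        (single_le_sum (fun _ _ => Nat.zero_le _) (mem_univ i)).trans_eq P.2⟩, P.2⟩
      invFun := fun f => ⟨fun i => f.1 i, f.2⟩
      left_inv := fun _ => rfl
      right_inv := fun _ => rfl }

lemma Multiset.sum_filter_ne_zero {M : Type*} [AddCommMonoid M] [DecidableEq M]
    (l : Multiset M) : (l.filter (· ≠ 0)).sum = l.sum := by
  conv_rhs => rw [← filter_add_not (· ≠ 0) l]
  rw [sum_add, sum_eq_zero (s := filter (fun x => ¬x ≠ 0) l)
    (fun x hx => by simpa using of_mem_filter hx), add_zero]

lemma Nat.Partition.ofSym_parts_eq_filter_count {ι : Type*} [Fintype ι] [DecidableEq ι]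
    {r : ℕ} (s : Sym ι r) :
    (Nat.Partition.ofSym s).parts
      = (univ.val.map fun i => s.1.count i).filter (· ≠ 0) := by
  have : univ.filter (fun i => s.1.count i ≠ 0) = s.1.toFinset := by
    ext; simp
  rw [Multiset.filter_map, ← Finset.filter_val]
  exact congrArg (Multiset.map _) (congrArg Finset.val this).symm

lemma Nat.Partition.card_ofSym_parts {ι : Type*} [DecidableEq ι] {r : ℕ} (s : Sym ι r) :
    (Nat.Partition.ofSym s).parts.card = #s.1.toFinset :=
  Multiset.card_map _ _

lemma Multiset.prod_map_eq_prod_pow_count {ι M : Type*} [Fintype ι] [DecidableEq ι]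
    [CommMonoid M] (s : Multiset ι) (a : ι → M) : (s.map a).prod = ∏ i, a i ^ s.count i := by
  rw [Finset.prod_multiset_map_count]
  exact prod_subset (subset_univ _) fun i _ hi => by
    rw [Multiset.count_eq_zero_of_notMem (by simpa using hi), pow_zero]

lemma Finset.card_powersetCard_univ_filter_superset {ι : Type*} [Fintype ι] [DecidableEq ι]
    (T : Finset ι) (k : ℕ) :
    #{V ∈ powersetCard k univ | T ⊆ V}
      = if #T ≤ k then (Fintype.card ι - #T).choose (k - #T) else 0 := by
  split_ifs with hT
  · rw [← card_univ]
    exact card_filter_powersetCard_subset T univ k (subset_univ T) hT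
  · rw [card_eq_zero, filter_eq_empty_iff]
    intro V hV hTV
    have := card_le_card hTV
    rw [(mem_powersetCard.1 hV).2] at this
    omega

lemma hsym_subtype {R ι : Type*} [CommSemiring R] [Fintype ι] [DecidableEq ι] (r : ℕ)
    (a : ι → R) (V : Finset ι) :
    hsym r (fun i : {x // x ∈ V} => a i)
      = ∑ s : Sym ι r with s.1.toFinset ⊆ V, (s.1.map a).prod := by
  refine sum_bij (fun t _ => t.map Subtype.val) (fun t _ => ?_)
    (fun t _ u _ h => Sym.map_injective Subtype.val_injective r h) (fun s hs => ?_)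
    (fun t _ => by simp [Multiset.map_map])
  · simp +contextual [subset_iff]
  · refine ⟨s.attach.map fun x => ⟨x.1, (mem_filter.1 hs).2 (Multiset.mem_toFinset.2 x.2)⟩,
      mem_univ _, ?_⟩
    rw [Sym.map_map]
    exact s.attach_map_coe

lemma sum_powersetCard_hsym_subtype {R ι : Type*} [CommSemiring R] [Fintype ι] [DecidableEq ι]
    (k r : ℕ) (a : ι → R) :
    ∑ V ∈ powersetCard k (univ : Finset ι), hsym r (fun i : {x // x ∈ V} => a i)
      = ∑ s : Sym ι r, #{V ∈ powersetCard k univ | s.1.toFinset ⊆ V}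
          • (s.1.map a).prod := by
  simp_rw [hsym_subtype]
  rw [sum_comm' (t' := univ) (s' := fun s => {V ∈ powersetCard k univ | s.1.toFinset ⊆ V})
    (fun V s => by simp only [mem_filter, mem_univ, true_and, and_true])]
  simp only [sum_const]

lemma msym_eq_sum_sym {R : Type*} [CommSemiring R] {m r : ℕ} (lam : Nat.Partition r)
    (a : Fin m → R) :
    msym lam a = ∑ s : Sym (Fin m) r with Nat.Partition.ofSym s = lam,
      (s.1.map a).prod := by
  -- `E` identifies a multiset `s` with its exponent vector `i ↦ count i s`.
  let E := Sym.equivFinNatSum (Fin m) r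
  have sum_eq {f : Fin m → Fin (r + 1)}
      (hf : (univ.val.map fun i => (f i : ℕ)).filter (· ≠ 0) = lam.parts) :
      ∑ i, (f i : ℕ) = r := by
    have := congrArg Multiset.sum hf
    rw [Multiset.sum_filter_ne_zero] at this
    exact this.trans lam.parts_sum
  symm
  refine sum_bij' (fun s _ => (E s).1) (fun f hf => E.symm ⟨f, sum_eq (mem_filter.1 hf).2⟩)
    (fun s hs => ?_) (fun f hf => ?_) (fun s _ => E.symm_apply_apply s)
    (fun f _ => congrArg Subtype.val (E.apply_symm_apply _))
    (fun s _ => Multiset.prod_map_eq_prod_pow_count _ a)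
  · rw [mem_filter] at hs ⊢
    exact ⟨mem_univ _, (Nat.Partition.ofSym_parts_eq_filter_count s).symm.trans (by rw [hs.2])⟩
  · rw [mem_filter] at hf ⊢
    refine ⟨mem_univ _, Nat.Partition.ext ?_⟩
    have hEf := congrArg Subtype.val (E.apply_symm_apply ⟨f, sum_eq hf.2⟩)
    rw [Nat.Partition.ofSym_parts_eq_filter_count]
    exact (congrArg (fun g : Fin m → Fin (r + 1) =>
      (univ.val.map fun i => (g i : ℕ)).filter (· ≠ 0)) hEf).trans hf.2

theorem stmt_10_general {R : Type*} [CommRing R] (m k j : ℕ)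
    (a : Fin m → R) :
    ∑ V ∈ Finset.powersetCard k (Finset.univ : Finset (Fin m)),
        hsym (j - k + 1) (fun i : {x // x ∈ V} => a i)
      = ∑ lam : Nat.Partition (j - k + 1),
          (if lam.parts.card ≤ k
            then (((m - lam.parts.card).choose (k - lam.parts.card) : ℕ) : R)
            else 0) * msym lam a := by
  rw [sum_powersetCard_hsym_subtype, ← sum_fiberwise univ (fun s => Nat.Partition.ofSym s)]
  refine sum_congr rfl fun lam _ => ?_
  rw [msym_eq_sum_sym, mul_sum]
  refine sum_congr rfl fun s hs => ?_
  rw [← (mem_filter.1 hs).2, Nat.Partition.card_ofSym_parts,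
    card_powersetCard_univ_filter_superset, Fintype.card_fin, nsmul_eq_mul, Nat.cast_ite,
    Nat.cast_zero]

theorem stmt_10 {R : Type*} [CommRing R] (m k j : ℕ)
    (hk : 1 ≤ k) (hkj : k ≤ j) (hjm : j ≤ m) (a : Fin m → R) :
    ∑ V ∈ Finset.powersetCard k (Finset.univ : Finset (Fin m)),
        hsym (j - k + 1) (fun i : {x // x ∈ V} => a i)
      = ∑ lam : Nat.Partition (j - k + 1),
          (if lam.parts.card ≤ k
            then (((m - lam.parts.card).choose (k - lam.parts.card) : ℕ) : R)
            else 0) * msym lam a :=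
  stmt_10_general m k j a
end

section
/- Let P be a polynomial over a field of characteristic 0, let u be an indeterminate, v = (1+u)^{m+1} u^{-m}, and let u_0 = u, u_1, ..., u_m be the roots of (1+U)^{m+1} = U^m v in an algebraic closure of the field of rational functions in u. Denote by P^>(u) the positive part in u of the Laurent polynomial P(v) (the sum of its monomials of positive degree in u). Then P(v) = P(0) + ∑_{i=0}^m (P^>(u_i) - P^>(-1)). -/
open Polynomial

/-- The Laurent polynomial `v = (1+u)^{m+1} u^{-m}` in the variable `u = T 1`. -/
noncomputable def vLaurent (K : Type*) [Field K] (m : ℕ) : LaurentPolynomial K :=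
  (1 + LaurentPolynomial.T 1) ^ (m + 1) * LaurentPolynomial.T (-(m : ℤ))

/-- The positive part `P^>` (in the variable `u`) of the Laurent polynomial
`P(v)`, where `v = (1+u)^{m+1} u^{-m}`: the sum of its monomials of positive
degree in `u`, viewed as an ordinary polynomial in `u`. -/
noncomputable def posPart (K : Type*) [Field K] (m : ℕ) (P : Polynomial K) :
    Polynomial K :=
  ∑ n ∈ (Polynomial.aeval (vLaurent K m) P).coeff.support.filter (fun n => 0 < n),
    Polynomial.C ((Polynomial.aeval (vLaurent K m) P).coeff n) * Polynomial.X ^ n.toNat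

/-!
Write `h = P^>`. The sum `∑ h(u_i)` is a symmetric function of the roots of
`(1+U)^{m+1} - vU^m`, hence equals `q(v)` for some `q ∈ K[X]`; since the coefficients are
polynomials in `v`, the same `q` also works at `v = 0`, where every root is `-1`, so
`q(0) = (m+1) h(-1)`. Splitting off `i = 0`,
`P(v) - q(v) = (P(v) - h(u)) - ∑_{i ≥ 1} h(u_i)`, and both terms are polynomials in `u⁻¹`: the
first by the definition of `h`, the second because `u_1, …, u_m` are the roots of
`((1+U)^{m+1} - vU^m) / (U - u)`, whose coefficients are polynomials in `u⁻¹`. But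
`v u⁻¹ = (1 + u⁻¹)^{m+1}`, so a nonconstant polynomial in `v` has a pole at `u⁻¹ = 0`.
Hence `P - q` is constant and `P(v) - q(v) = P(0) - q(0)`.
-/

open Finset

namespace LaurentPolynomial

variable {R A : Type*} [CommSemiring R]

noncomputable def positivePart (f : R[T;T⁻¹]) : R[X] :=
  ∑ n ∈ f.coeff.support with 0 < n, Polynomial.C (f.coeff n) * X ^ n.toNat

theorem as_sum_support_C_mul_T (f : R[T;T⁻¹]) :
    f = ∑ n ∈ f.coeff.support, C (f.coeff n) * T n := by
  conv_lhs => rw [← AddMonoidAlgebra.sum_coeff_single f]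
  simp [Finsupp.sum, single_eq_C_mul_T]

theorem eval₂_eq_sum [CommSemiring A] (g : R →+* A) (x : Aˣ) (f : R[T;T⁻¹]) :
    eval₂ g x f = ∑ n ∈ f.coeff.support, g (f.coeff n) * ↑(x ^ n) := by
  conv_lhs => rw [as_sum_support_C_mul_T f]
  simp only [map_sum, eval₂_C_mul_T]

theorem eval₂_aeval [CommSemiring A] [Algebra R A] (x : Aˣ) (f : R[T;T⁻¹]) (P : R[X]) :
    eval₂ (algebraMap R A) x (aeval f P) = aeval (eval₂ (algebraMap R A) x f) P := by
  rw [aeval_def, hom_eval₂, aeval_def]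
  congr 1
  ext a
  simp

theorem eval₂_sub_aeval_positivePart_mem_adjoin [CommRing A] [Algebra R A] (x : Aˣ)
    (f : R[T;T⁻¹]) :
    eval₂ (algebraMap R A) x f - aeval (x : A) f.positivePart ∈
      Algebra.adjoin R {((x⁻¹ : Aˣ) : A)} := by
  have hpos : ∑ n ∈ f.coeff.support with 0 < n, algebraMap R A (f.coeff n) * ↑(x ^ n) =
      aeval (x : A) f.positivePart := by
    simp only [positivePart, map_sum, map_mul, aeval_C, map_pow, aeval_X]
    refine sum_congr rfl fun n hn => ?_
    rw [← Units.val_pow_eq_pow_val, ← zpow_natCast, Int.toNat_of_nonneg (mem_filter.1 hn).2.le]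
  rw [eval₂_eq_sum, ← sum_filter_add_sum_filter_not _ (0 < ·), hpos, add_sub_cancel_left]
  refine Subalgebra.sum_mem _ fun n hn => Subalgebra.mul_mem _ (Subalgebra.algebraMap_mem _ _) ?_
  have hn : n ≤ 0 := not_lt.1 (mem_filter.1 hn).2
  have hxn : x ^ n = x⁻¹ ^ (-n).toNat := by
    rw [← zpow_natCast, Int.toNat_of_nonneg (by omega), inv_zpow', neg_neg]
  rw [hxn, Units.val_pow_eq_pow_val]
  exact Subalgebra.pow_mem _ (Algebra.self_mem_adjoin_singleton R _) _

end LaurentPolynomial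

namespace MvPolynomial

variable {R A : Type*} [CommRing R] [CommRing A] [Algebra R A] {σ : Type*} [Fintype σ]

theorem isSymmetric_sum_aeval_X (h : R[X]) :
    (∑ i, Polynomial.aeval (X i : MvPolynomial σ R) h).IsSymmetric := by
  intro e
  simp_rw [map_sum, ← Polynomial.aeval_algHom_apply, rename_X]
  exact Equiv.sum_comp e (fun j => Polynomial.aeval (X j) h)

theorem IsSymmetric.aeval_mem {H : MvPolynomial σ R} (hH : H.IsSymmetric) {x : σ → A}
    {S : Subalgebra R A}
    (hS : ∀ k, 0 < k → k ≤ Fintype.card σ → aeval x (esymm σ R k) ∈ S) : aeval x H ∈ S := by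
  obtain ⟨Q, hQ⟩ := esymmAlgHom_surjective R (n := Fintype.card σ) le_rfl ⟨H, hH⟩
  have hHQ : H = aeval (fun i : Fin (Fintype.card σ) => esymm σ R (i + 1)) Q := by
    rw [← esymmAlgHom_apply, hQ]
  rw [hHQ, comp_aeval_apply]
  have hrange : Algebra.adjoin R (Set.range fun i : Fin (Fintype.card σ) =>
      aeval x (esymm σ R (i + 1))) ≤ S := by
    refine Algebra.adjoin_le ?_
    rintro _ ⟨i, rfl⟩
    exact hS _ i.succ_pos i.isLt
  exact hrange (aeval_range (R := R) (S₁ := A) _ ▸ AlgHom.mem_range_self _ Q)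

theorem sum_aeval_mem_of_esymm_mem {x : σ → A} {S : Subalgebra R A}
    (hS : ∀ k, 0 < k → k ≤ Fintype.card σ → aeval x (esymm σ R k) ∈ S) (h : R[X]) :
    ∑ i, Polynomial.aeval (x i) h ∈ S := by
  have := (isSymmetric_sum_aeval_X (σ := σ) h).aeval_mem hS
  simpa only [map_sum, ← Polynomial.aeval_algHom_apply, aeval_X] using this

theorem aeval_esymm_eq_coeff_prod (x : σ → A) {k : ℕ} (hk : k ≤ Fintype.card σ) :
    aeval x (esymm σ R k) =
      (-1) ^ k * (∏ i, (Polynomial.X - Polynomial.C (x i))).coeff (Fintype.card σ - k) := by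
  have hcard : Multiset.card (univ.val.map x) = Fintype.card σ := by simp
  have h := Multiset.prod_X_sub_C_coeff (univ.val.map x) (k := Fintype.card σ - k) (by omega)
  rw [hcard, Nat.sub_sub_self hk, Multiset.map_map, Function.comp_def] at h
  rw [aeval_esymm_eq_multiset_esymm, prod_eq_multiset_prod, h, ← mul_assoc,
    ← mul_pow, neg_one_mul, neg_neg, one_pow, one_mul]

end MvPolynomial

namespace Polynomial

theorem exists_aeval_eq_sum_aeval_of_prod_eq_map {R A B σ : Type*} [CommRing R] [CommRing A]
    [Algebra R A] [CommRing B] [Algebra R B] [Fintype σ] (F : R[X][X]) {x : σ → A} {a : A}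
    (hx : ∏ i, (X - C (x i)) = F.map (aeval a).toRingHom) {y : σ → B} {b : B}
    (hy : ∏ i, (X - C (y i)) = F.map (aeval b).toRingHom) (h : R[X]) :
    ∃ q : R[X], aeval a q = ∑ i, aeval (x i) h ∧ aeval b q = ∑ i, aeval (y i) h := by
  -- The pairs `(x i, y i)` are the roots of `F` over the point `(a, b)` of `A × B`.
  have hesymm : ∀ k, 0 < k → k ≤ Fintype.card σ →
      MvPolynomial.aeval (fun i => (x i, y i)) (MvPolynomial.esymm σ R k) ∈
        AlgHom.range (aeval (R := R) (a, b)) := by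
    intro k _ hk
    refine (AlgHom.mem_range _).2 ⟨(-1) ^ k * F.coeff (Fintype.card σ - k), ?_⟩
    rw [aeval_prod_apply]
    refine Prod.ext ?_ ?_
    · change _ = AlgHom.fst R A B _
      rw [MvPolynomial.comp_aeval_apply]
      simp [MvPolynomial.aeval_esymm_eq_coeff_prod _ hk, hx]
    · change _ = AlgHom.snd R A B _
      rw [MvPolynomial.comp_aeval_apply]
      simp [MvPolynomial.aeval_esymm_eq_coeff_prod _ hk, hy]
  obtain ⟨q, hq⟩ := (AlgHom.mem_range _).1 (MvPolynomial.sum_aeval_mem_of_esymm_mem hesymm h)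
  simp only [aeval_prod_apply, Prod.ext_iff, Prod.fst_sum, Prod.snd_sum] at hq
  exact ⟨q, hq⟩

theorem pow_succ_mul_coeff_eq_neg_sum {A : Type*} [CommRing A] (u : A) (G : A[X]) (s : ℕ) :
    u ^ (s + 1) * G.coeff s = -∑ k ∈ range (s + 1), ((X - C u) * G).coeff k * u ^ k := by
  induction s with
  | zero => simp [sub_mul, coeff_C_mul]
  | succ s ih =>
    rw [sum_range_succ, sub_mul, coeff_sub, coeff_X_mul, coeff_C_mul, ← sub_mul, neg_add, ← ih]
    ring

theorem coeff_mem_adjoin_inv_of_X_sub_C_mul {R A : Type*} [CommRing R] [CommRing A]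
    [Algebra R A] (u : Aˣ) {G : A[X]} {s : ℕ}
    (hF : ∀ k ≤ s, ((X - C (u : A)) * G).coeff k ∈ (⊥ : Subalgebra R A)) :
    G.coeff s ∈ Algebra.adjoin R {((u⁻¹ : Aˣ) : A)} := by
  set w : A := ((u⁻¹ : Aˣ) : A)
  have hwu : w * u = 1 := u.inv_mul
  have hG : G.coeff s = -∑ k ∈ range (s + 1), ((X - C (u : A)) * G).coeff k * w ^ (s + 1 - k) :=
    calc G.coeff s = w ^ (s + 1) * (u ^ (s + 1) * G.coeff s) := by
          rw [← mul_assoc, ← mul_pow, hwu, one_pow, one_mul]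
      _ = _ := by
          rw [pow_succ_mul_coeff_eq_neg_sum, mul_neg, mul_sum]
          congr 1
          refine sum_congr rfl fun k hk => ?_
          have hpow : w ^ (s + 1) = w ^ (s + 1 - k) * w ^ k := by
            rw [← pow_add, Nat.sub_add_cancel (mem_range.1 hk).le]
          have hwuk : (w * u) ^ k = 1 := by rw [hwu, one_pow]
          rw [hpow]
          linear_combination (((X - C (u : A)) * G).coeff k * w ^ (s + 1 - k)) * hwuk
  rw [hG]
  refine neg_mem (Subalgebra.sum_mem _ fun k hk => Subalgebra.mul_mem _ ?_ ?_)
  · exact (bot_le : (⊥ : Subalgebra R A) ≤ _) (hF k (by simpa [Nat.lt_succ_iff] using hk))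
  · exact Subalgebra.pow_mem _ (Algebra.self_mem_adjoin_singleton R _) _

theorem natDegree_eq_zero_of_aeval_mem_adjoin {R A : Type*} [CommRing R] [IsDomain R]
    [CommRing A] [Algebra R A] {t v : A} (ht : Transcendental R t) {p : R[X]} (hp : p.eval 0 ≠ 0)
    (hv : v * t = aeval t p) {g : R[X]} (hg : aeval v g ∈ Algebra.adjoin R {t}) :
    g.natDegree = 0 := by
  by_contra hN
  obtain ⟨w, hw⟩ : ∃ w : R[X], aeval t w = aeval v g := by
    rwa [Algebra.adjoin_singleton_eq_range_aeval, AlgHom.mem_range] at hg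
  set N := g.natDegree
  -- `t ^ N * g(v) = Q(t)` with `Q(0) = lead(g) * p(0) ^ N ≠ 0`,
  -- whereas `t ^ N * w(t)` vanishes at `0`.
  set Q : R[X] := ∑ k ∈ range (N + 1), C (g.coeff k) * X ^ (N - k) * p ^ k with hQ
  have hQt : aeval t Q = t ^ N * aeval v g := by
    rw [aeval_eq_sum_range (p := g), mul_sum, hQ, map_sum]
    refine sum_congr rfl fun k hk => ?_
    have hpow : t ^ N = t ^ (N - k) * t ^ k := by
      rw [← pow_add, Nat.sub_add_cancel (mem_range_succ_iff.1 hk)]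
    rw [hpow, map_mul, map_mul, map_pow, map_pow, aeval_C, aeval_X, ← hv, Algebra.smul_def]
    ring
  have hQw : Q = X ^ N * w :=
    transcendental_iff_injective.1 ht (by rw [hQt, map_mul, map_pow, aeval_X, hw])
  have hQ0 : Q.eval 0 = g.leadingCoeff * p.eval 0 ^ N := by
    rw [hQ, eval_finsetSum, sum_eq_single N]
    · rw [Nat.sub_self, pow_zero, mul_one, eval_mul, eval_C, eval_pow]
      rfl
    · intro k hk hkN
      simp [zero_pow (show N - k ≠ 0 by have := mem_range_succ_iff.1 hk; omega)]
    · simp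
  have hlead : g.leadingCoeff * p.eval 0 ^ N = 0 := by
    rw [← hQ0, hQw]
    simp [zero_pow hN]
  have hg0 : g ≠ 0 := ne_zero_of_natDegree_gt (Nat.pos_of_ne_zero hN)
  exact mul_ne_zero (leadingCoeff_ne_zero.2 hg0) (pow_ne_zero _ hp) hlead

end Polynomial

theorem posPart_eq_positivePart (K : Type*) [Field K] (m : ℕ) (P : K[X]) :
    posPart K m P = (aeval (vLaurent K m) P).positivePart :=
  rfl

section Roots

variable {K L : Type*} [Field K] [Field L] [Algebra K L] {m : ℕ} {u v : L}

theorem eval₂_vLaurent (x : Lˣ) :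
    LaurentPolynomial.eval₂ (algebraMap K L) x (vLaurent K m) = (1 + x) ^ (m + 1) / x ^ m := by
  simp [vLaurent, div_eq_mul_inv]

theorem aeval_sub_aeval_posPart_mem_adjoin (hu : u ≠ 0) (hv : v = (1 + u) ^ (m + 1) / u ^ m)
    (P : K[X]) : aeval v P - aeval u (posPart K m P) ∈ Algebra.adjoin K {u⁻¹} := by
  have := LaurentPolynomial.eval₂_sub_aeval_positivePart_mem_adjoin (Units.mk0 u hu)
    (aeval (vLaurent K m) P)
  rwa [LaurentPolynomial.eval₂_aeval, eval₂_vLaurent, Units.val_inv_eq_inv_val, Units.val_mk0,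
    ← hv, ← posPart_eq_positivePart] at this

theorem mul_inv_eq_aeval_inv (hu : u ≠ 0) (hv : v = (1 + u) ^ (m + 1) / u ^ m) :
    v * u⁻¹ = aeval u⁻¹ ((X + 1) ^ (m + 1) : K[X]) := by
  have hinv : u⁻¹ + 1 = (1 + u) / u := by field_simp
  rw [hv, map_pow, map_add, aeval_X, map_one, hinv, div_pow]
  field_simp
  ring

theorem sum_aeval_succ_mem_adjoin_inv (hu : u ≠ 0) {r : Fin (m + 1) → L} (hr0 : r 0 = u)
    (hr : ((1 + X) ^ (m + 1) - C v * X ^ m : L[X]) = ∏ i, (X - C (r i))) (h : K[X]) :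
    ∑ i : Fin m, aeval (r i.succ) h ∈ Algebra.adjoin K {u⁻¹} := by
  refine MvPolynomial.sum_aeval_mem_of_esymm_mem (fun k _ hk => ?_) h
  rw [Fintype.card_fin] at hk
  rw [MvPolynomial.aeval_esymm_eq_coeff_prod _ (by rwa [Fintype.card_fin]), Fintype.card_fin]
  refine Subalgebra.mul_mem _ (Subalgebra.pow_mem _ (neg_mem (one_mem _)) _) ?_
  have hx : ((Units.mk0 u hu)⁻¹ : Lˣ) = u⁻¹ := by simp
  rw [← hx]
  refine coeff_mem_adjoin_inv_of_X_sub_C_mul _ fun j hj => ?_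
  have hXG : (X - C ((Units.mk0 u hu : Lˣ) : L)) * ∏ i : Fin m, (X - C (r i.succ)) =
      (1 + X) ^ (m + 1) - C v * X ^ m := by
    rw [hr, Fin.prod_univ_succ, hr0, Units.val_mk0]
  rw [hXG, coeff_sub, coeff_one_add_X_pow, coeff_C_mul_X_pow, if_neg (by omega), sub_zero]
  exact Subalgebra.natCast_mem _ _

theorem aeval_eq_aeval_zero_add_sum_posPart (htr : Transcendental K u)
    (hv : v = (1 + u) ^ (m + 1) / u ^ m) {r : Fin (m + 1) → L} (hr0 : r 0 = u)
    (hr : ((1 + X) ^ (m + 1) - C v * X ^ m : L[X]) = ∏ i, (X - C (r i))) (P : K[X]) :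
    aeval v P = aeval 0 P + ∑ i, (aeval (r i) (posPart K m P) - aeval (-1) (posPart K m P)) := by
  have hu : u ≠ 0 := fun hu0 => htr (hu0 ▸ isAlgebraic_zero)
  set h := posPart K m P
  obtain ⟨q, hqv, hq0⟩ := exists_aeval_eq_sum_aeval_of_prod_eq_map
    ((1 + X) ^ (m + 1) - C X * X ^ m) (a := v) (hr.symm.trans (by simp))
    (y := fun _ => (-1 : L)) (b := 0) (by simp [add_comm]) h
  have hconst : (P - q).natDegree = 0 := by
    refine natDegree_eq_zero_of_aeval_mem_adjoin (fun halg => htr (IsAlgebraic.inv_iff.1 halg))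
      (by simp) (mul_inv_eq_aeval_inv hu hv) ?_
    have hsplit : aeval v (P - q) =
        (aeval v P - aeval u h) - ∑ i : Fin m, aeval (r i.succ) h := by
      rw [map_sub, hqv, Fin.sum_univ_succ, hr0]
      ring
    rw [hsplit]
    exact sub_mem (aeval_sub_aeval_posPart_mem_adjoin hu hv P)
      (sum_aeval_succ_mem_adjoin_inv hu hr0 hr h)
  have hPq : aeval v (P - q) = aeval 0 (P - q) := by
    rw [eq_C_of_natDegree_eq_zero hconst]
    simp
  rw [map_sub, map_sub, hqv, hq0] at hPq
  rw [sum_sub_distrib]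
  linear_combination hPq

end Roots

theorem stmt_14_general (K : Type*) [Field K] (m : ℕ)
    (u : AlgebraicClosure (RatFunc K))
    (hu : u = algebraMap (RatFunc K) (AlgebraicClosure (RatFunc K)) RatFunc.X)
    (v : AlgebraicClosure (RatFunc K)) (hv : v = (1 + u) ^ (m + 1) / u ^ m)
    (r : Fin (m + 1) → AlgebraicClosure (RatFunc K)) (hr0 : r 0 = u)
    (hr : ((1 + X) ^ (m + 1) - C v * X ^ m : Polynomial (AlgebraicClosure (RatFunc K)))
        = ∏ i, (X - C (r i)))
    (P : Polynomial K)
    (φ : K →+* AlgebraicClosure (RatFunc K))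
    (hφ : φ = (algebraMap (RatFunc K) (AlgebraicClosure (RatFunc K))).comp
        (algebraMap K (RatFunc K))) :
    Polynomial.eval v (P.map φ)
      = Polynomial.eval 0 (P.map φ) +
        ∑ i, (Polynomial.eval (r i) ((posPart K m P).map φ)
              - Polynomial.eval (-1) ((posPart K m P).map φ)) := by
  obtain rfl : φ = algebraMap K _ := hφ.trans (IsScalarTower.algebraMap_eq _ _ _).symm
  simp only [eval_map_algebraMap]
  have htr : Transcendental K u := by
    rw [hu, transcendental_algebraMap_iff (algebraMap (RatFunc K) _).injective]
    exact RatFunc.transcendental_X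
  exact aeval_eq_aeval_zero_add_sum_posPart htr hv hr0 hr P

theorem stmt_14 (K : Type*) [Field K] [CharZero K] (m : ℕ) (hm : 1 ≤ m)
    (u : AlgebraicClosure (RatFunc K))
    (hu : u = algebraMap (RatFunc K) (AlgebraicClosure (RatFunc K)) RatFunc.X)
    (v : AlgebraicClosure (RatFunc K)) (hv : v = (1 + u) ^ (m + 1) / u ^ m)
    (r : Fin (m + 1) → AlgebraicClosure (RatFunc K)) (hr0 : r 0 = u)
    (hr : ((1 + X) ^ (m + 1) - C v * X ^ m : Polynomial (AlgebraicClosure (RatFunc K)))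
        = ∏ i, (X - C (r i)))
    (P : Polynomial K)
    (φ : K →+* AlgebraicClosure (RatFunc K))
    (hφ : φ = (algebraMap (RatFunc K) (AlgebraicClosure (RatFunc K))).comp
        (algebraMap K (RatFunc K))) :
    Polynomial.eval v (P.map φ)
      = Polynomial.eval 0 (P.map φ) +
        ∑ i, (Polynomial.eval (r i) ((posPart K m P).map φ)
              - Polynomial.eval (-1) ((posPart K m P).map φ)) :=
  stmt_14_general K m u hu v hv r hr0 hr P φ hφ
end

section
/- Define H_k(x_0,...,x_k) = ∑_{i=0}^k H(x_i)/∏_{j≠i}(A(x_i) - A(x_j)) where A(x) = (x/(1+x))e^{-z x} and H(z;x) is a power series in z with polynomial coefficients in x over a field K of characteristic 0. Then H_k(x_0,...,x_k), a priori a power series in z with rational-function coefficients, in fact has coefficients in K[x_0, ..., x_k]; and if additionally H(-1) = 0, then every coefficient of H_k is divisible by (1+x_0)(1+x_1)···(1+x_k). -/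
/-- The formal power series `exp(c·z)` in `z`, with coefficients `c^n/n!`. -/
noncomputable def expF {F : Type*} [Field F] (c : F) : PowerSeries F :=
  PowerSeries.mk fun n => (n.factorial : F)⁻¹ * c ^ n

/-- The series `A(x) = (x/(1+x))·e^{-zx}`. -/
noncomputable def AofF {F : Type*} [Field F] (x : F) : PowerSeries F :=
  PowerSeries.C (x / (1 + x)) * expF (-x)

/-! Since `A(x) - A(y) = (x - y)/((1 + x)(1 + y)) · V(x, y)` with `V` a power series with
polynomial coefficients and constant term `1`, the `m`-th coefficient of `H_k` has the form
`∑ i, t i / ∏_{j ≠ i} (x_i - x_j)` with polynomials `t i`. It is also a symmetric rational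
function, because permuting the `x_i` only permutes the summands of `H_k`. Multiplied by the
Vandermonde determinant it becomes an antisymmetric polynomial; such a polynomial vanishes on
every hyperplane `x_a = x_b`, so it is divisible by each of the pairwise non-associated
irreducibles `x_a - x_b`, hence by their product, the Vandermonde determinant, and the coefficient is a polynomial. If `H(-1) = 0`, then
`1 + x_i` divides every coefficient of `H(x_i)`, so `∏_l (1 + x_l)` divides every `t i` and the
same argument applies to the coefficient divided by `∏_l (1 + x_l)`. -/

namespace MvPolynomial

open Finset

variable {σ R : Type*} [CommRing R]

theorem irreducible_X_sub_X [IsDomain R] {a b : σ} (hab : a ≠ b) :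
    Irreducible (X a - X b : MvPolynomial σ R) := by
  classical
  simpa [sub_eq_add_neg] using irreducible_mul_X_add 1 (-X b) a one_ne_zero (by simp)
    (by simp [vars_X, hab]) isRelPrime_one_left

theorem isRelPrime_X_sub_X [IsDomain R] {a b c d : σ} (hab : a ≠ b) (hcd : c ≠ d)
    (h : (c ≠ a ∧ c ≠ b) ∨ (d ≠ a ∧ d ≠ b)) :
    IsRelPrime (X a - X b : MvPolynomial σ R) (X c - X d) := by
  classical
  rw [(irreducible_X_sub_X hab).isRelPrime_iff_not_dvd]
  intro hdvd
  rcases h with ⟨hca, hcb⟩ | ⟨hda, hdb⟩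
  · simpa [Ne.symm hca, Ne.symm hcb, hcd.symm] using
      map_dvd (eval fun t => if t = c then (1 : R) else 0) hdvd
  · simpa [Ne.symm hda, Ne.symm hdb, hcd] using
      map_dvd (eval fun t => if t = d then (1 : R) else 0) hdvd

theorem X_sub_X_dvd_of_rename_swap_eq_neg [DecidableEq σ] [IsDomain R] [CharZero R] {a b : σ}
    (hab : a ≠ b) {p : MvPolynomial σ R} (hp : rename (Equiv.swap a b) p = -p) :
    X a - X b ∣ p := by
  let κ : MvPolynomial σ R →ₐ[R] MvPolynomial σ R := aeval (Function.update X b (X a))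
  let π := Ideal.Quotient.mkₐ R (Ideal.span {(X a - X b : MvPolynomial σ R)})
  have hκ_swap : κ.comp (rename (Equiv.swap a b)) = κ := by
    ext t
    rcases eq_or_ne t a with rfl | hta
    · simp [κ, hab]
    rcases eq_or_ne t b with rfl | htb
    · simp [κ, hab]
    · simp [κ, Equiv.swap_apply_of_ne_of_ne hta htb]
  have hπκ : π.comp κ = π := by
    ext t
    rcases eq_or_ne t b with rfl | htb
    · simp [κ, π, Ideal.Quotient.mkₐ_eq_mk, Ideal.Quotient.eq]
    · simp [κ, htb]
  have hκp : κ p = 0 := by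
    rw [← CharZero.eq_neg_self_iff, ← map_neg, ← hp, ← AlgHom.comp_apply, hκ_swap]
  rw [← Ideal.mem_span_singleton, ← Ideal.Quotient.eq_zero_iff_mem, ← Ideal.Quotient.mkₐ_eq_mk R]
  change π p = 0
  rw [← hπκ, AlgHom.comp_apply, hκp, map_zero]

noncomputable def vandermondeDet (n : ℕ) (R : Type*) [CommRing R] : MvPolynomial (Fin n) R :=
  (Matrix.vandermonde X).det

variable {n : ℕ}

theorem rename_vandermondeDet (τ : Equiv.Perm (Fin n)) :
    rename τ (vandermondeDet n R) = (Equiv.Perm.sign τ : ℤ) * vandermondeDet n R := by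
  rw [vandermondeDet, AlgHom.map_det, ← Matrix.det_permute]
  congr 1
  ext i j
  simp [Matrix.vandermonde]

theorem vandermondeDet_ne_zero [IsDomain R] : vandermondeDet n R ≠ 0 :=
  Matrix.det_vandermonde_ne_zero_iff.mpr X_injective

theorem X_sub_X_dvd_vandermondeDet {a b : Fin n} (hab : a ≠ b) :
    X a - X b ∣ vandermondeDet n R := by
  rw [vandermondeDet, Matrix.det_vandermonde]
  rcases hab.lt_or_gt with h | h
  · rw [← neg_sub, neg_dvd]
    exact (dvd_prod_of_mem (fun j => X j - X a) (mem_Ioi.mpr h)).trans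
      (dvd_prod_of_mem (fun i => ∏ j ∈ Ioi i, (X j - X i)) (mem_univ a))
  · exact (dvd_prod_of_mem (fun j => X j - X b) (mem_Ioi.mpr h)).trans
      (dvd_prod_of_mem (fun i => ∏ j ∈ Ioi i, (X j - X i)) (mem_univ b))

variable {K : Type*} [Field K]

theorem prod_erase_X_sub_X_dvd_vandermondeDet (i : Fin n) :
    ∏ j ∈ univ.erase i, (X i - X j) ∣ vandermondeDet n K := by
  refine prod_dvd_of_isRelPrime ?_ fun j hj =>
    X_sub_X_dvd_vandermondeDet (ne_of_mem_erase hj).symm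
  intro j hj j' hj' hjj'
  simp only [coe_erase, Set.mem_sdiff, Set.mem_singleton_iff] at hj hj'
  exact isRelPrime_X_sub_X (Ne.symm hj.2) (Ne.symm hj'.2) (Or.inr ⟨hj'.2, Ne.symm hjj'⟩)

theorem vandermondeDet_dvd_of_rename_swap_eq_neg [CharZero K] {p : MvPolynomial (Fin n) K}
    (hp : ∀ a b, a ≠ b → rename (Equiv.swap a b) p = -p) : vandermondeDet n K ∣ p := by
  rw [vandermondeDet, Matrix.det_vandermonde, prod_sigma']
  refine prod_dvd_of_isRelPrime ?_ fun e he => ?_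
  · rintro ⟨i, j⟩ he ⟨i', j'⟩ he' hne
    simp only [coe_sigma, Set.mem_sigma_iff, mem_coe, mem_univ, mem_Ioi, true_and] at he he'
    refine isRelPrime_X_sub_X he.ne' he'.ne' ?_
    by_contra! h
    obtain ⟨rfl, rfl⟩ : j' = j ∧ i' = i := by grind
    exact hne rfl
  · simp only [mem_sigma, mem_univ, mem_Ioi, true_and] at he
    exact X_sub_X_dvd_of_rename_swap_eq_neg he.ne' (hp _ _ he.ne')

end MvPolynomial

section FractionField

open MvPolynomial

variable {K : Type*} [Field K] {n : ℕ}

local notation "𝓡" => MvPolynomial (Fin n) K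
local notation "𝔽" => FractionRing (MvPolynomial (Fin n) K)

noncomputable def renameFrac (τ : Equiv.Perm (Fin n)) : 𝔽 ≃+* 𝔽 :=
  IsFractionRing.ringEquivOfRingEquiv (renameEquiv K τ).toRingEquiv

theorem renameFrac_algebraMap (τ : Equiv.Perm (Fin n)) (p : 𝓡) :
    renameFrac τ (algebraMap 𝓡 𝔽 p) = algebraMap 𝓡 𝔽 (rename τ p) :=
  IsFractionRing.ringEquivOfRingEquiv_algebraMap _ p

theorem exists_eq_algebraMap_of_vandermondeDet_mul [CharZero K] {S : 𝔽}
    (hS : ∀ τ, renameFrac τ S = S) {N : 𝓡}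
    (hN : algebraMap 𝓡 𝔽 (vandermondeDet n K) * S = algebraMap 𝓡 𝔽 N) :
    ∃ p, S = algebraMap 𝓡 𝔽 p := by
  have hanti : ∀ a b, a ≠ b → rename (Equiv.swap a b) N = -N := by
    intro a b hab
    apply IsFractionRing.injective 𝓡 𝔽
    rw [← renameFrac_algebraMap, ← hN, map_mul, hS, renameFrac_algebraMap, rename_vandermondeDet,
      Equiv.Perm.sign_swap hab, map_neg, ← hN]
    simp
  obtain ⟨p, rfl⟩ := vandermondeDet_dvd_of_rename_swap_eq_neg hanti
  refine ⟨p, mul_left_cancel₀ ?_ (hN.trans (map_mul _ _ _))⟩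
  exact (map_ne_zero_iff _ (IsFractionRing.injective _ _)).mpr vandermondeDet_ne_zero

theorem exists_vandermondeDet_mul_sum_div_eq (t : Fin n → 𝓡) :
    ∃ N, algebraMap 𝓡 𝔽 (vandermondeDet n K)
        * ∑ i, algebraMap 𝓡 𝔽 (t i) / algebraMap 𝓡 𝔽 (∏ j ∈ Finset.univ.erase i, (X i - X j))
      = algebraMap 𝓡 𝔽 N := by
  choose c hc using prod_erase_X_sub_X_dvd_vandermondeDet (K := K) (n := n)
  refine ⟨∑ i, t i * c i, ?_⟩
  rw [Finset.mul_sum, map_sum]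
  refine Finset.sum_congr rfl fun i _ => ?_
  have hP : algebraMap 𝓡 𝔽 (∏ j ∈ Finset.univ.erase i, (X i - X j)) ≠ 0 := by
    rw [map_ne_zero_iff _ (IsFractionRing.injective _ _)]
    intro h
    exact vandermondeDet_ne_zero (by rw [hc i, h, zero_mul])
  rw [hc i, map_mul, map_mul]
  field_simp

theorem exists_eq_algebraMap_of_eq_sum_div [CharZero K] {S : 𝔽} (hS : ∀ τ, renameFrac τ S = S)
    (t : Fin n → 𝓡)
    (hSt : S = ∑ i, algebraMap 𝓡 𝔽 (t i)
      / algebraMap 𝓡 𝔽 (∏ j ∈ Finset.univ.erase i, (X i - X j))) :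
    ∃ p, S = algebraMap 𝓡 𝔽 p :=
  have ⟨_, hN⟩ := exists_vandermondeDet_mul_sum_div_eq t
  exists_eq_algebraMap_of_vandermondeDet_mul hS (hSt ▸ hN)

theorem exists_eq_algebraMap_mul_of_eq_sum_div [CharZero K] {S : 𝔽}
    (hS : ∀ τ, renameFrac τ S = S) {d : 𝓡} (hd : ∀ τ : Equiv.Perm (Fin n), rename τ d = d)
    (hd₀ : d ≠ 0) (t : Fin n → 𝓡) (hdt : ∀ i, d ∣ t i)
    (hSt : S = ∑ i, algebraMap 𝓡 𝔽 (t i)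
      / algebraMap 𝓡 𝔽 (∏ j ∈ Finset.univ.erase i, (X i - X j))) :
    ∃ p, S = algebraMap 𝓡 𝔽 (d * p) := by
  choose t' ht' using hdt
  have hd₀' : algebraMap 𝓡 𝔽 d ≠ 0 :=
    (map_ne_zero_iff _ (IsFractionRing.injective _ _)).mpr hd₀
  obtain ⟨p, hp⟩ := exists_eq_algebraMap_of_eq_sum_div (S := S / algebraMap 𝓡 𝔽 d)
    (fun τ => by rw [map_div₀, hS, renameFrac_algebraMap, hd]) t' (by
      rw [hSt, Finset.sum_div]
      refine Finset.sum_congr rfl fun i _ => ?_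
      rw [ht', map_mul]
      field_simp)
  exact ⟨p, by rw [map_mul, ← hp, mul_div_cancel₀ _ hd₀']⟩

end FractionField

namespace PowerSeries

theorem constantCoeff_map {R S : Type*} [CommRing R] [CommRing S] (f : R →+* S)
    (φ : PowerSeries R) : constantCoeff (map f φ) = f (constantCoeff φ) := by
  rw [← coeff_zero_eq_constantCoeff_apply, coeff_map, coeff_zero_eq_constantCoeff_apply]

theorem map_inv {k l : Type*} [Field k] [Field l] (f : k →+* l) (φ : PowerSeries k) :
    map f φ⁻¹ = (map f φ)⁻¹ := by
  by_cases hφ : constantCoeff φ = 0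
  · rw [inv_eq_zero.mpr hφ, inv_eq_zero.mpr (by rw [constantCoeff_map, hφ, map_zero]), map_zero]
  · rw [eq_comm, inv_eq_iff_mul_eq_one (by rwa [constantCoeff_map, map_ne_zero]), ← map_mul,
      PowerSeries.inv_mul_cancel _ hφ, map_one]

theorem inv_map_eq_map_invOfUnit {S F : Type*} [CommRing S] [Field F] (f : S →+* F)
    {φ : PowerSeries S} (hφ : constantCoeff φ = 1) :
    (map f φ)⁻¹ = map f (invOfUnit φ 1) := by
  rw [inv_eq_iff_mul_eq_one (by simp [constantCoeff_map, hφ]), ← map_mul,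
    invOfUnit_mul φ 1 (by simp [hφ]), map_one]

end PowerSeries

section SeriesA

open PowerSeries

theorem map_expF {F L : Type*} [Field F] [Field L] (f : F →+* L) (c : F) :
    map f (expF c) = expF (f c) := by
  ext n
  simp [expF, coeff_map]

theorem map_AofF {F L : Type*} [Field F] [Field L] (f : F →+* L) (x : F) :
    map f (AofF x) = AofF (f x) := by
  simp [AofF, map_expF]

/-- `(1 + x)(1 + y)(A(x) - A(y))/(x - y)` without division: `x - y` times the bracket of the
`n`-th coefficient is `x ^ (n + 1) * (1 + y) - y ^ (n + 1) * (1 + x)`. -/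
noncomputable def diffQuotA {S : Type*} [CommRing S] [Algebra ℚ S] (x y : S) : PowerSeries S :=
  mk fun n => algebraMap ℚ S ((-1) ^ n / n.factorial) *
    (∑ a ∈ Finset.range (n + 1), x ^ a * y ^ (n - a)
      + x * y * ∑ a ∈ Finset.range n, x ^ a * y ^ (n - 1 - a))

variable {S : Type*} [CommRing S] [Algebra ℚ S]

theorem constantCoeff_diffQuotA (x y : S) : constantCoeff (diffQuotA x y) = 1 := by
  simp [diffQuotA, ← coeff_zero_eq_constantCoeff_apply]

theorem map_diffQuotA {T : Type*} [CommRing T] [Algebra ℚ T] (f : S →+* T) (x y : S) :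
    map f (diffQuotA x y) = diffQuotA (f x) (f y) := by
  ext n
  simp [diffQuotA, coeff_map, map_sum, RingHom.map_rat_algebraMap]

theorem AofF_sub_AofF {F : Type*} [Field F] [CharZero F] {x y : F} (hx : 1 + x ≠ 0)
    (hy : 1 + y ≠ 0) :
    AofF x - AofF y = C ((x - y) / ((1 + x) * (1 + y))) * diffQuotA x y := by
  ext n
  have key : (x - y) * (∑ a ∈ Finset.range (n + 1), x ^ a * y ^ (n - a)
      + x * y * ∑ a ∈ Finset.range n, x ^ a * y ^ (n - 1 - a))
      = x ^ (n + 1) * (1 + y) - y ^ (n + 1) * (1 + x) := by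
    have h₁ := geom_sum₂_mul x y (n + 1)
    have h₂ := geom_sum₂_mul x y n
    rw [Nat.add_sub_cancel] at h₁
    linear_combination h₁ + x * y * h₂
  simp only [AofF, expF, diffQuotA, map_sub, coeff_C_mul, coeff_mk, map_div₀, map_pow, map_neg,
    map_one, map_natCast, neg_pow x, neg_pow y]
  field_simp
  rw [key]
  ring

theorem inv_prod_AofF_sub {ι F : Type*} [Field F] [CharZero F] (f : S →+* F) (x : S) (y : ι → S)
    (s : Finset ι) (hx : f (1 + x) ≠ 0) (hy : ∀ j ∈ s, f (1 + y j) ≠ 0) :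
    (∏ j ∈ s, (AofF (f x) - AofF (f (y j))))⁻¹
      = C (f (∏ j ∈ s, (1 + x) * (1 + y j)) / f (∏ j ∈ s, (x - y j)))
        * map f (invOfUnit (∏ j ∈ s, diffQuotA x (y j)) 1) := by
  have hfactor : ∀ j ∈ s, AofF (f x) - AofF (f (y j))
      = C (f (x - y j) / f ((1 + x) * (1 + y j))) * map f (diffQuotA x (y j)) := by
    intro j hj
    rw [map_diffQuotA, AofF_sub_AofF (by simpa using hx) (by simpa using hy j hj)]
    simp
  have hconst : constantCoeff (∏ j ∈ s, diffQuotA x (y j)) = 1 := by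
    simp [constantCoeff_diffQuotA]
  rw [Finset.prod_congr rfl hfactor, Finset.prod_mul_distrib, ← map_prod, ← map_prod,
    Finset.prod_div_distrib, ← map_prod, ← map_prod, PowerSeries.mul_inv_rev,
    inv_map_eq_map_invOfUnit f hconst, C_inv, inv_div, mul_comm]

end SeriesA

section DividedDifference

open PowerSeries

variable {K F : Type*} [CommRing K] [Field F] {ι : Type*} [Fintype ι] [DecidableEq ι]

noncomputable def dividedDiffA (H : PowerSeries (Polynomial K)) (ψ : K →+* F) (x : ι → F) :
    PowerSeries F :=
  ∑ i, map (Polynomial.eval₂RingHom ψ (x i)) H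
    * (∏ j ∈ Finset.univ.erase i, (AofF (x i) - AofF (x j)))⁻¹

theorem map_map_eval₂RingHom {S T : Type*} [CommRing S] [CommRing T] (f : S →+* T)
    (H : PowerSeries (Polynomial K)) (ψ : K →+* S) (x : S) :
    map f (map (Polynomial.eval₂RingHom ψ x) H)
      = map (Polynomial.eval₂RingHom (f.comp ψ) (f x)) H := by
  ext n
  simp [coeff_map, Polynomial.hom_eval₂]

theorem map_dividedDiffA {L : Type*} [Field L] (f : F →+* L) (H : PowerSeries (Polynomial K))
    (ψ : K →+* F) (x : ι → F) :
    map f (dividedDiffA H ψ x) = dividedDiffA H (f.comp ψ) (f ∘ x) := by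
  simp only [dividedDiffA, map_sum, map_mul, PowerSeries.map_inv, map_prod, map_sub, map_AofF,
    map_map_eval₂RingHom, Function.comp_apply]

theorem dividedDiffA_comp_perm (H : PowerSeries (Polynomial K)) (ψ : K →+* F) (x : ι → F)
    (τ : Equiv.Perm ι) : dividedDiffA H ψ (x ∘ τ) = dividedDiffA H ψ x := by
  refine Fintype.sum_equiv τ _ _ fun i => ?_
  congr 2
  exact Finset.prod_equiv τ (by simp [τ.injective.ne_iff]) (by simp)

end DividedDifference

section AtVariables

open MvPolynomial

variable {K : Type*} [Field K] {n : ℕ}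

local notation "𝓡" => MvPolynomial (Fin n) K
local notation "𝔽" => FractionRing (MvPolynomial (Fin n) K)

theorem one_add_X_ne_zero (i : Fin n) : (1 + X i : 𝓡) ≠ 0 := fun h => by
  simpa using congrArg constantCoeff h

noncomputable def dividedDiffANumerator [CharZero K] (H : PowerSeries (Polynomial K))
    (i : Fin n) : PowerSeries 𝓡 :=
  PowerSeries.C (∏ j ∈ Finset.univ.erase i, (1 + X i) * (1 + X j))
    * PowerSeries.map (Polynomial.eval₂RingHom C (X i)) H
    * PowerSeries.invOfUnit (∏ j ∈ Finset.univ.erase i, diffQuotA (X i) (X j)) 1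

theorem coeff_dividedDiffA_X [CharZero K] (H : PowerSeries (Polynomial K)) (m : ℕ) :
    PowerSeries.coeff m (dividedDiffA H ((algebraMap 𝓡 𝔽).comp C) fun i => algebraMap 𝓡 𝔽 (X i))
      = ∑ i, algebraMap 𝓡 𝔽 (PowerSeries.coeff m (dividedDiffANumerator H i))
          / algebraMap 𝓡 𝔽 (∏ j ∈ Finset.univ.erase i, (X i - X j)) := by
  have hι : ∀ p : 𝓡, p ≠ 0 → algebraMap 𝓡 𝔽 p ≠ 0 := fun p =>
    (map_ne_zero_iff _ (IsFractionRing.injective _ _)).mpr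
  rw [dividedDiffA, map_sum]
  refine Finset.sum_congr rfl fun i _ => ?_
  rw [inv_prod_AofF_sub (algebraMap 𝓡 𝔽) (X i) X _ (hι _ (one_add_X_ne_zero i))
    fun j _ => hι _ (one_add_X_ne_zero j), ← map_map_eval₂RingHom, mul_left_comm,
    PowerSeries.coeff_C_mul, ← map_mul, PowerSeries.coeff_map, dividedDiffANumerator, mul_assoc,
    PowerSeries.coeff_C_mul, map_mul (algebraMap 𝓡 𝔽), mul_div_right_comm]

theorem map_renameFrac_dividedDiffA_X (H : PowerSeries (Polynomial K))
    (τ : Equiv.Perm (Fin n)) :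
    PowerSeries.map (renameFrac (K := K) τ : 𝔽 →+* 𝔽)
        (dividedDiffA H ((algebraMap 𝓡 𝔽).comp C) fun i => algebraMap 𝓡 𝔽 (X i))
      = dividedDiffA H ((algebraMap 𝓡 𝔽).comp C) fun i => algebraMap 𝓡 𝔽 (X i) := by
  have hψ : (renameFrac (K := K) τ : 𝔽 →+* 𝔽).comp ((algebraMap 𝓡 𝔽).comp C)
      = (algebraMap 𝓡 𝔽).comp C := by
    ext c
    simp [renameFrac_algebraMap]
  have hx : (renameFrac (K := K) τ : 𝔽 →+* 𝔽) ∘ (fun i => algebraMap 𝓡 𝔽 (X i))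
      = (fun i => algebraMap 𝓡 𝔽 (X i)) ∘ τ := by
    ext i
    simp [renameFrac_algebraMap]
  rw [map_dividedDiffA, hψ, hx, dividedDiffA_comp_perm]

theorem rename_prod_one_add_X (τ : Equiv.Perm (Fin n)) :
    rename τ (∏ l, (1 + X l) : 𝓡) = ∏ l, (1 + X l) := by
  simp [map_prod, Equiv.prod_comp τ fun l => (1 + X l : 𝓡)]

theorem prod_one_add_X_dvd_coeff_dividedDiffANumerator [CharZero K]
    {H : PowerSeries (Polynomial K)} (hH : ∀ m, Polynomial.eval (-1) (PowerSeries.coeff m H) = 0)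
    (i : Fin n) (m : ℕ) :
    ∏ l, (1 + X l) ∣ PowerSeries.coeff m (dividedDiffANumerator H i) := by
  have hHi : ∀ m, (1 + X i : 𝓡)
      ∣ PowerSeries.coeff m (PowerSeries.map (Polynomial.eval₂RingHom C (X i)) H) := by
    intro m
    obtain ⟨q, hq⟩ := Polynomial.dvd_iff_isRoot.mpr (hH m)
    rw [PowerSeries.coeff_map, hq, map_mul]
    exact dvd_mul_of_dvd_left (by simp [add_comm]) _
  have hprod : ∏ l ∈ Finset.univ.erase i, (1 + X l)
      ∣ ∏ j ∈ Finset.univ.erase i, ((1 + X i) * (1 + X j) : 𝓡) :=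
    Finset.prod_dvd_prod_of_dvd _ _ fun j _ => dvd_mul_left _ _
  rw [dividedDiffANumerator, mul_assoc, PowerSeries.coeff_C_mul,
    ← Finset.mul_prod_erase _ _ (Finset.mem_univ i), mul_comm (1 + X i)]
  refine mul_dvd_mul hprod ?_
  rw [PowerSeries.coeff_mul]
  exact Finset.dvd_sum fun p _ => dvd_mul_of_dvd_left (hHi p.1) _

end AtVariables

theorem stmt_18 (K : Type*) [Field K] [CharZero K] (k : ℕ)
    (H : PowerSeries (Polynomial K)) :
    let R := MvPolynomial (Fin (k + 1)) K
    let F := FractionRing R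
    let ψ : K →+* F := (algebraMap R F).comp (MvPolynomial.C)
    let xe : Fin (k + 1) → F := fun i => algebraMap R F (MvPolynomial.X i)
    let Hat : Fin (k + 1) → PowerSeries F := fun i =>
      PowerSeries.mk fun n => Polynomial.eval₂ ψ (xe i) (PowerSeries.coeff n H)
    let Hk : PowerSeries F :=
      ∑ i, Hat i * (∏ j ∈ Finset.univ.erase i, (AofF (xe i) - AofF (xe j)))⁻¹
    (∀ n, ∃ p : R, PowerSeries.coeff n Hk = algebraMap R F p) ∧
    ((∀ n, Polynomial.eval (-1) (PowerSeries.coeff n H) = 0) →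
      ∀ n, ∃ p : R, PowerSeries.coeff n Hk
          = algebraMap R F ((∏ i, (1 + MvPolynomial.X i)) * p)) := by
  intro R F ψ xe Hat Hk
  have hHk : Hk = dividedDiffA H ψ xe :=
    Finset.sum_congr rfl fun i _ => congrArg (· * _) <| PowerSeries.ext fun m => by
      simp [Hat, PowerSeries.coeff_map]
  have hsymm : ∀ m τ, renameFrac τ (PowerSeries.coeff m Hk) = PowerSeries.coeff m Hk := by
    intro m τ
    rw [hHk]
    exact (PowerSeries.coeff_map _ m _).symm.trans
      (congrArg _ (map_renameFrac_dividedDiffA_X H τ))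
  have hsum := fun m => hHk ▸ coeff_dividedDiffA_X H m
  refine ⟨fun m => exists_eq_algebraMap_of_eq_sum_div (hsymm m) _ (hsum m), fun hH m => ?_⟩
  exact exists_eq_algebraMap_mul_of_eq_sum_div (hsymm m) rename_prod_one_add_X
    (Finset.prod_ne_zero_iff.mpr fun l _ => one_add_X_ne_zero l) _
    (fun i => prod_one_add_X_dvd_coeff_dividedDiffANumerator hH i m) (hsum m)
end

section
/- Let z, u, y be indeterminates and set t = z·e^{-2z}. The power series G(u,y) = (1+u)·e^{2yz}·[u^≥]( e^{zu(y-1)+z y/u} - (1/u)·e^{z(y-1)/u + zyu} ), where [u^≥] extracts the terms of non-negative degree in u, satisfies the functional equation ∂G/∂y (u,y) = z(1+u)(1+1/u)·(G(u,y) - G(0,y)) together with the initial condition G(u,0) = (1+u)e^{-zu}. -/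
/-- The formal power series `exp(c·z)` in `z`, with coefficients `c^n/n!`. -/
noncomputable def expZ {A : Type*} [CommRing A] [Algebra ℚ A] (c : A) :
    PowerSeries A :=
  PowerSeries.mk fun n => (n.factorial : ℚ)⁻¹ • c ^ n

/-- Non-negative part (in `u`) of a Laurent polynomial. -/
noncomputable def nonnegL (p : LaurentPolynomial ℚ) : LaurentPolynomial ℚ :=
  ∑ n ∈ p.coeff.support.filter (fun n => 0 ≤ n),
    LaurentPolynomial.C (p.coeff n) * LaurentPolynomial.T n

/-- Non-negative part in `u`, applied to each coefficient of a polynomial in `y`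
whose coefficients are Laurent polynomials in `u`. -/
noncomputable def nonnegY (q : Polynomial (LaurentPolynomial ℚ)) :
    Polynomial (LaurentPolynomial ℚ) :=
  q.sum fun k c => Polynomial.C (nonnegL c) * Polynomial.X ^ k

/-- Non-negative part in `u` of a power series in `z` whose coefficients are
polynomials in `y` with Laurent-polynomial coefficients in `u`. -/
noncomputable def nonnegS (f : PowerSeries (Polynomial (LaurentPolynomial ℚ))) :
    PowerSeries (Polynomial (LaurentPolynomial ℚ)) :=
  PowerSeries.mk fun n => nonnegY (PowerSeries.coeff n f)

/-- Coefficient-wise evaluation at `u = 0` (each coefficient of `G` being a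
polynomial in `u`, this is extraction of the constant term in `u`). -/
noncomputable def evalU0 (q : Polynomial (LaurentPolynomial ℚ)) :
    Polynomial (LaurentPolynomial ℚ) :=
  q.sum fun k c => Polynomial.C (LaurentPolynomial.C (c.coeff 0)) * Polynomial.X ^ k

/-! Both exponents `A = u(y-1) + y/u` and `B = (y-1)/u + yu` of `F = e^{zA} - u⁻¹e^{zB}` have
`y`-derivative `u + u⁻¹`, so `∂_y F = z(u + u⁻¹)F`, and `∂_y` commutes with `[u^≥]`. Multiplying
by `u` (resp. `u⁻¹`) commutes with `[u^≥]` up to the boundary term `[u^{-1}]` (resp. `-u⁻¹[u^0]`).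
The involution `u ↦ u⁻¹` exchanges `A` and `B`, whence `[u^{-1}]F = -[u^0]F`; moreover
`[u^0]G = e^{2yz}[u^0]F`. Since `2 + u + u⁻¹ = (1 + u)(1 + u⁻¹)`, this gives the functional
equation. At `y = 0`, `F = e^{-zu} - u⁻¹e^{-z/u}`, whose first term has only nonnegative and whose
second only negative powers of `u`. -/

open scoped LaurentPolynomial Polynomial

section InnerCoeff

variable {A : Type*} [CommRing A]

lemma Polynomial.coeff_sum_C_mul_X_pow (φ : A →+ A) (q : A[X]) (j : ℕ) :
    (q.sum fun k c => Polynomial.C (φ c) * Polynomial.X ^ k).coeff j = φ (q.coeff j) := by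
  simp only [Polynomial.sum_def, Polynomial.finsetSum_coeff, Polynomial.coeff_C_mul_X_pow]
  rw [Finset.sum_ite_eq]
  split_ifs with h
  · rfl
  · rw [Polynomial.notMem_support_iff.mp h, map_zero]

noncomputable def mapInnerCoeff (φ : A →+ A) : PowerSeries A[X] →+ PowerSeries A[X] where
  toFun f := PowerSeries.mk fun n =>
    (PowerSeries.coeff n f).sum fun k c => Polynomial.C (φ c) * Polynomial.X ^ k
  map_zero' := by
    ext
    rw [PowerSeries.coeff_mk, Polynomial.coeff_sum_C_mul_X_pow]
    simp
  map_add' f g := by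
    ext
    simp only [PowerSeries.coeff_mk, map_add, Polynomial.coeff_add,
      Polynomial.coeff_sum_C_mul_X_pow]

@[simp]
lemma coeff_coeff_mapInnerCoeff (φ : A →+ A) (f : PowerSeries A[X]) (n j : ℕ) :
    (PowerSeries.coeff n (mapInnerCoeff φ f)).coeff j = φ ((PowerSeries.coeff n f).coeff j) := by
  rw [mapInnerCoeff, AddMonoidHom.coe_mk, ZeroHom.coe_mk, PowerSeries.coeff_mk,
    Polynomial.coeff_sum_C_mul_X_pow]

lemma mapInnerCoeff_add_left (φ ψ : A →+ A) (f : PowerSeries A[X]) :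
    mapInnerCoeff (φ + ψ) f = mapInnerCoeff φ f + mapInnerCoeff ψ f := by
  ext; simp

lemma mapInnerCoeff_sub_left (φ ψ : A →+ A) (f : PowerSeries A[X]) :
    mapInnerCoeff (φ - ψ) f = mapInnerCoeff φ f - mapInnerCoeff ψ f := by
  ext; simp

lemma mapInnerCoeff_zero_left (f : PowerSeries A[X]) : mapInnerCoeff 0 f = 0 := by
  ext; simp

lemma mapInnerCoeff_comp (φ ψ : A →+ A) (f : PowerSeries A[X]) :
    mapInnerCoeff (φ.comp ψ) f = mapInnerCoeff φ (mapInnerCoeff ψ f) := by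
  ext; simp

lemma mapInnerCoeff_mulLeft (a : A) (f : PowerSeries A[X]) :
    mapInnerCoeff (AddMonoidHom.mulLeft a) f = PowerSeries.C (Polynomial.C a) * f := by
  ext; simp

lemma mapInnerCoeff_X_mul (φ : A →+ A) (f : PowerSeries A[X]) :
    mapInnerCoeff φ (PowerSeries.X * f) = PowerSeries.X * mapInnerCoeff φ f := by
  ext n j
  rcases n with _ | n
  · simp only [coeff_coeff_mapInnerCoeff, PowerSeries.coeff_zero_X_mul]
    simp
  · simp only [coeff_coeff_mapInnerCoeff, PowerSeries.coeff_succ_X_mul]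

lemma mapInnerCoeff_map (φ : A →+ A) (σ : A →+* A) (f : PowerSeries A[X]) :
    mapInnerCoeff φ (PowerSeries.map (Polynomial.mapRingHom σ) f)
      = mapInnerCoeff (φ.comp σ.toAddMonoidHom) f := by
  ext; simp

lemma mapInnerCoeff_map_algebraMap_mul [Algebra ℚ A] (φ : A →+ A) (g : PowerSeries ℚ[X])
    (f : PowerSeries A[X]) :
    mapInnerCoeff φ (PowerSeries.map (Polynomial.mapRingHom (algebraMap ℚ A)) g * f)
      = PowerSeries.map (Polynomial.mapRingHom (algebraMap ℚ A)) g * mapInnerCoeff φ f := by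
  ext n j
  simp only [coeff_coeff_mapInnerCoeff, PowerSeries.coeff_mul, Polynomial.finsetSum_coeff,
    Polynomial.coeff_mul, map_sum, PowerSeries.coeff_map]
  refine Finset.sum_congr rfl fun p _ => Finset.sum_congr rfl fun q _ => ?_
  rw [Polynomial.coe_mapRingHom, Polynomial.coeff_map, ← Algebra.smul_def, ← Algebra.smul_def,
    map_rat_smul]

lemma coeff_map_evalRingHom_zero_mapInnerCoeff (φ : A →+ A)
    (f : PowerSeries A[X]) (n : ℕ) :
    PowerSeries.coeff n (PowerSeries.map (Polynomial.evalRingHom 0) (mapInnerCoeff φ f))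
      = φ (PowerSeries.coeff n (PowerSeries.map (Polynomial.evalRingHom 0) f)) := by
  simp [← Polynomial.coeff_zero_eq_eval_zero]

end InnerCoeff

section ExpZ

variable {A B : Type*} [CommRing A] [Algebra ℚ A] [CommRing B] [Algebra ℚ B]

@[simp]
lemma expZ_zero : expZ (0 : A) = 1 := by
  ext n
  rcases n with _ | n <;> simp [expZ, PowerSeries.coeff_one]

lemma map_expZ (f : A →+* B) (c : A) : PowerSeries.map f (expZ c) = expZ (f c) := by
  ext n
  simp only [expZ, PowerSeries.coeff_map, PowerSeries.coeff_mk, map_rat_smul, map_pow]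

end ExpZ

section YDeriv

variable {A : Type*} [CommRing A]

noncomputable def yDeriv : PowerSeries A[X] →+ PowerSeries A[X] where
  toFun f := PowerSeries.mk fun n => Polynomial.derivative (PowerSeries.coeff n f)
  map_zero' := by ext; simp
  map_add' f g := by ext; simp

lemma mk_derivative_eq_yDeriv (f : PowerSeries A[X]) :
    PowerSeries.mk (fun n => Polynomial.derivative (PowerSeries.coeff n f)) = yDeriv f := rfl

@[simp]
lemma coeff_yDeriv (f : PowerSeries A[X]) (n : ℕ) :
    PowerSeries.coeff n (yDeriv f) = Polynomial.derivative (PowerSeries.coeff n f) := by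
  simp [yDeriv]

lemma yDeriv_mul (f g : PowerSeries A[X]) : yDeriv (f * g) = yDeriv f * g + f * yDeriv g := by
  ext n : 1
  simp only [coeff_yDeriv, PowerSeries.coeff_mul, map_sum, map_add, ← Finset.sum_add_distrib,
    Polynomial.derivative_mul]

lemma yDeriv_C (a : A[X]) : yDeriv (PowerSeries.C a) = PowerSeries.C (Polynomial.derivative a) := by
  ext n : 1
  simp only [coeff_yDeriv, PowerSeries.coeff_C]
  split_ifs <;> simp

lemma yDeriv_C_mul (a : A[X]) (f : PowerSeries A[X]) :
    yDeriv (PowerSeries.C a * f)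
      = PowerSeries.C (Polynomial.derivative a) * f + PowerSeries.C a * yDeriv f := by
  rw [yDeriv_mul, yDeriv_C]

lemma yDeriv_mapInnerCoeff (φ : A →+ A) (f : PowerSeries A[X]) :
    yDeriv (mapInnerCoeff φ f) = mapInnerCoeff φ (yDeriv f) := by
  ext n j
  simp only [coeff_yDeriv, Polynomial.coeff_derivative, coeff_coeff_mapInnerCoeff]
  rw [← Nat.cast_succ, mul_comm, ← nsmul_eq_mul, mul_comm, ← nsmul_eq_mul, map_nsmul]

lemma yDeriv_expZ [Algebra ℚ A] (c : A[X]) :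
    yDeriv (expZ c) = PowerSeries.X * PowerSeries.C (Polynomial.derivative c) * expZ c := by
  ext n : 1
  rcases n with _ | n
  · simp [expZ]
  · rw [mul_assoc, PowerSeries.coeff_succ_X_mul, PowerSeries.coeff_C_mul, coeff_yDeriv]
    simp only [expZ, PowerSeries.coeff_mk, Polynomial.derivative_smul, Polynomial.derivative_pow,
      Nat.add_sub_cancel]
    have hfact : ((n + 1).factorial : ℚ)⁻¹ * ((n + 1 : ℕ) : ℚ) = (n.factorial : ℚ)⁻¹ := by
      rw [Nat.factorial_succ]; push_cast; field_simp
    rw [Polynomial.C_eq_natCast, mul_assoc, ← nsmul_eq_mul, ← Nat.cast_smul_eq_nsmul ℚ, smul_smul,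
      hfact, mul_smul_comm, mul_comm]

end YDeriv

section Laurent

open LaurentPolynomial

section CoeffAt

variable {R : Type*} [CommSemiring R]

lemma LaurentPolynomial.coeff_mul_T (a m : ℤ) (p : R[T;T⁻¹]) :
    (p * T a).coeff m = p.coeff (m - a) := by
  rw [T, AddMonoidAlgebra.coeff_mul_single_apply, mul_one, sub_eq_add_neg]

noncomputable def coeffAt (k : ℤ) : R[T;T⁻¹] →+ R[T;T⁻¹] where
  toFun p := C (p.coeff k)
  map_zero' := by simp
  map_add' p q := by simp

@[simp]
lemma coeffAt_apply (k : ℤ) (p : R[T;T⁻¹]) : coeffAt k p = C (p.coeff k) := rfl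

lemma coeffAt_comp_mulLeft_T (k a : ℤ) :
    (coeffAt k).comp (AddMonoidHom.mulLeft (T a)) = coeffAt (R := R) (k - a) :=
  AddMonoidHom.ext fun p => by simp [LaurentPolynomial.coeff_mul_T]

lemma coeffAt_comp_invert (k : ℤ) :
    (coeffAt k).comp (invert (R := R) : R[T;T⁻¹] →+* R[T;T⁻¹]).toAddMonoidHom = coeffAt (-k) :=
  AddMonoidHom.ext fun p => by simp

end CoeffAt

lemma coeff_nonnegL (p : ℚ[T;T⁻¹]) (m : ℤ) :
    (nonnegL p).coeff m = if 0 ≤ m then p.coeff m else 0 := by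
  simp only [nonnegL, ← single_eq_C_mul_T, AddMonoidAlgebra.coeff_sum, Finset.sum_apply',
    AddMonoidAlgebra.coeff_single, Finsupp.single_apply, Finset.sum_ite_eq', Finset.mem_filter,
    Finsupp.mem_support_iff]
  split_ifs <;> simp_all

noncomputable def nonnegPart : ℚ[T;T⁻¹] →+ ℚ[T;T⁻¹] where
  toFun := nonnegL
  map_zero' := LaurentPolynomial.ext fun m => by simp [coeff_nonnegL]
  map_add' p q := LaurentPolynomial.ext fun m => by
    simp only [coeff_nonnegL, AddMonoidAlgebra.coeff_add, Finsupp.coe_add, Pi.add_apply]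
    split_ifs <;> simp

lemma nonnegPart_comp_mulLeft_T_one :
    nonnegPart.comp (AddMonoidHom.mulLeft (T 1))
      = (AddMonoidHom.mulLeft (T 1)).comp nonnegPart + coeffAt (-1) :=
  AddMonoidHom.ext fun p => LaurentPolynomial.ext fun m => by
    simp only [nonnegPart, AddMonoidHom.coe_comp, AddMonoidHom.coe_mk, ZeroHom.coe_mk,
      AddMonoidHom.coe_mulLeft, Function.comp_apply, T_mul, coeff_nonnegL, coeff_mul_T,
      AddMonoidHom.add_apply, coeffAt_apply, AddMonoidAlgebra.coeff_add, Finsupp.coe_add,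
      Pi.add_apply, C_apply]
    split_ifs <;> first | (exfalso; omega) | simp_all

lemma nonnegPart_comp_mulLeft_T_neg_one :
    nonnegPart.comp (AddMonoidHom.mulLeft (T (-1)))
      = (AddMonoidHom.mulLeft (T (-1))).comp (nonnegPart - coeffAt 0) :=
  AddMonoidHom.ext fun p => LaurentPolynomial.ext fun m => by
    simp only [nonnegPart, AddMonoidHom.coe_comp, AddMonoidHom.coe_mk, ZeroHom.coe_mk,
      AddMonoidHom.coe_mulLeft, Function.comp_apply, T_mul, coeff_nonnegL, coeff_mul_T,
      AddMonoidHom.sub_apply, AddMonoidHom.comp_sub, coeffAt_apply, AddMonoidAlgebra.coeff_sub,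
      Finsupp.coe_sub, Pi.sub_apply, C_apply]
    split_ifs <;> first | (exfalso; omega) | simp_all

lemma coeffAt_comp_nonnegPart_of_nonneg {k : ℤ} (hk : 0 ≤ k) :
    (coeffAt k).comp nonnegPart = coeffAt k :=
  AddMonoidHom.ext fun p => by simp [nonnegPart, coeff_nonnegL, hk]

lemma coeffAt_comp_nonnegPart_of_neg {k : ℤ} (hk : k < 0) :
    (coeffAt k).comp nonnegPart = 0 :=
  AddMonoidHom.ext fun p => by simp [nonnegPart, coeff_nonnegL, hk.not_ge]

lemma nonnegL_C_mul_T (r : ℚ) (k : ℤ) :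
    nonnegL (C r * T k) = if 0 ≤ k then C r * T k else 0 := by
  split_ifs with hk <;> refine LaurentPolynomial.ext fun m => ?_ <;>
    simp only [coeff_nonnegL, ← single_eq_C_mul_T, AddMonoidAlgebra.coeff_single,
      Finsupp.single_apply, AddMonoidAlgebra.coeff_zero, Finsupp.coe_zero, Pi.zero_apply] <;>
    split_ifs <;> first | rfl | omega

lemma coeff_expZ_C_mul_T (c : ℚ) (k : ℤ) (n : ℕ) :
    PowerSeries.coeff n (expZ (C c * T k : ℚ[T;T⁻¹]))
      = C ((n.factorial : ℚ)⁻¹ * c ^ n) * T (n * k) := by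
  rw [expZ, PowerSeries.coeff_mk, mul_pow, ← map_pow, T_pow, smul_eq_C_mul, map_mul, mul_assoc]

end Laurent

lemma nonnegS_eq_mapInnerCoeff (f : PowerSeries ℚ[T;T⁻¹][X]) :
    nonnegS f = mapInnerCoeff nonnegPart f := rfl

lemma mk_evalU0_eq_mapInnerCoeff (f : PowerSeries ℚ[T;T⁻¹][X]) :
    PowerSeries.mk (fun n => evalU0 (PowerSeries.coeff n f)) = mapInnerCoeff (coeffAt 0) f := rfl

section SeriesOverLaurent

open LaurentPolynomial

lemma mapInnerCoeff_coeffAt_C_T_mul {R : Type*} [CommRing R] (k a : ℤ)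
    (f : PowerSeries R[T;T⁻¹][X]) :
    mapInnerCoeff (coeffAt k) (PowerSeries.C (Polynomial.C (T a)) * f)
      = mapInnerCoeff (coeffAt (k - a)) f := by
  rw [← mapInnerCoeff_mulLeft, ← mapInnerCoeff_comp, coeffAt_comp_mulLeft_T]

lemma mapInnerCoeff_coeffAt_map_invert {R : Type*} [CommRing R] (k : ℤ)
    (f : PowerSeries R[T;T⁻¹][X]) :
    mapInnerCoeff (coeffAt k)
        (PowerSeries.map (Polynomial.mapRingHom (invert (R := R) : R[T;T⁻¹] →+* R[T;T⁻¹])) f)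
      = mapInnerCoeff (coeffAt (-k)) f := by
  rw [mapInnerCoeff_map, coeffAt_comp_invert]

lemma mapInnerCoeff_coeffAt_nonnegS_of_nonneg {k : ℤ} (hk : 0 ≤ k) (f : PowerSeries ℚ[T;T⁻¹][X]) :
    mapInnerCoeff (coeffAt k) (nonnegS f) = mapInnerCoeff (coeffAt k) f := by
  rw [nonnegS_eq_mapInnerCoeff, ← mapInnerCoeff_comp, coeffAt_comp_nonnegPart_of_nonneg hk]

lemma mapInnerCoeff_coeffAt_nonnegS_of_neg {k : ℤ} (hk : k < 0) (f : PowerSeries ℚ[T;T⁻¹][X]) :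
    mapInnerCoeff (coeffAt k) (nonnegS f) = 0 := by
  rw [nonnegS_eq_mapInnerCoeff, ← mapInnerCoeff_comp, coeffAt_comp_nonnegPart_of_neg hk,
    mapInnerCoeff_zero_left]

lemma nonnegS_C_T_one_mul (f : PowerSeries ℚ[T;T⁻¹][X]) :
    nonnegS (PowerSeries.C (Polynomial.C (T 1)) * f)
      = PowerSeries.C (Polynomial.C (T 1)) * nonnegS f + mapInnerCoeff (coeffAt (-1)) f := by
  rw [nonnegS_eq_mapInnerCoeff, nonnegS_eq_mapInnerCoeff, ← mapInnerCoeff_mulLeft,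
    ← mapInnerCoeff_comp, nonnegPart_comp_mulLeft_T_one, mapInnerCoeff_add_left,
    mapInnerCoeff_comp, mapInnerCoeff_mulLeft]

lemma nonnegS_C_T_neg_one_mul (f : PowerSeries ℚ[T;T⁻¹][X]) :
    nonnegS (PowerSeries.C (Polynomial.C (T (-1))) * f)
      = PowerSeries.C (Polynomial.C (T (-1))) * (nonnegS f - mapInnerCoeff (coeffAt 0) f) := by
  rw [nonnegS_eq_mapInnerCoeff, nonnegS_eq_mapInnerCoeff, ← mapInnerCoeff_mulLeft,
    ← mapInnerCoeff_comp, nonnegPart_comp_mulLeft_T_neg_one, mapInnerCoeff_comp,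
    mapInnerCoeff_mulLeft, mapInnerCoeff_sub_left]

end SeriesOverLaurent

namespace FunctionalEquation

open LaurentPolynomial

noncomputable def u : ℚ[T;T⁻¹][X] := Polynomial.C (T 1)

noncomputable def ubar : ℚ[T;T⁻¹][X] := Polynomial.C (T (-1))

noncomputable def F : PowerSeries ℚ[T;T⁻¹][X] :=
  expZ (u * (Polynomial.X - 1) + Polynomial.X * ubar)
    - PowerSeries.C ubar * expZ (ubar * (Polynomial.X - 1) + Polynomial.X * u)

noncomputable def G : PowerSeries ℚ[T;T⁻¹][X] :=
  PowerSeries.C (1 + u) * expZ (2 * Polynomial.X) * nonnegS F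

lemma u_mul_ubar : u * ubar = 1 := by
  rw [u, ubar, ← map_mul, ← T_add, add_neg_cancel, T_zero, map_one]

lemma yDeriv_F : yDeriv F = PowerSeries.X * PowerSeries.C (u + ubar) * F := by
  have hA : Polynomial.derivative (u * (Polynomial.X - 1) + Polynomial.X * ubar) = u + ubar := by
    simp [u, ubar]
  have hB : Polynomial.derivative (ubar * (Polynomial.X - 1) + Polynomial.X * u) = u + ubar := by
    simp [u, ubar, add_comm]
  have hubar : Polynomial.derivative ubar = 0 := Polynomial.derivative_C
  rw [F, map_sub, yDeriv_C_mul, yDeriv_expZ, yDeriv_expZ, hA, hB, hubar, map_zero, zero_mul,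
    zero_add]
  ring

lemma coeffAt_neg_one_F : mapInnerCoeff (coeffAt (-1)) F = -mapInnerCoeff (coeffAt 0) F := by
  have hB : expZ (ubar * (Polynomial.X - 1) + Polynomial.X * u)
      = PowerSeries.map (Polynomial.mapRingHom (invert (R := ℚ) : ℚ[T;T⁻¹] →+* ℚ[T;T⁻¹]))
          (expZ (u * (Polynomial.X - 1) + Polynomial.X * ubar)) := by
    rw [map_expZ]
    simp [u, ubar]
  simp only [F, ubar, map_sub, mapInnerCoeff_coeffAt_C_T_mul]
  rw [← ubar, hB, mapInnerCoeff_coeffAt_map_invert, mapInnerCoeff_coeffAt_map_invert]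
  norm_num

lemma yDeriv_nonnegS_F :
    yDeriv (nonnegS F) = PowerSeries.X * (PowerSeries.C (u + ubar) * nonnegS F
      - PowerSeries.C (1 + ubar) * mapInnerCoeff (coeffAt 0) F) := by
  rw [nonnegS_eq_mapInnerCoeff, yDeriv_mapInnerCoeff, yDeriv_F, mul_assoc, mapInnerCoeff_X_mul,
    map_add, add_mul, map_add]
  simp only [← nonnegS_eq_mapInnerCoeff]
  rw [u, ubar, nonnegS_C_T_one_mul, nonnegS_C_T_neg_one_mul, ← ubar, coeffAt_neg_one_F]
  simp only [map_add, map_one]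
  ring

lemma coeffAt_zero_G :
    mapInnerCoeff (coeffAt 0) G = expZ (2 * Polynomial.X) * mapInnerCoeff (coeffAt 0) F := by
  have h2X : expZ (2 * Polynomial.X : ℚ[T;T⁻¹][X])
      = PowerSeries.map (Polynomial.mapRingHom (algebraMap ℚ ℚ[T;T⁻¹]))
          (expZ (2 * Polynomial.X)) := by
    rw [map_expZ]
    simp
  have hG : G = expZ (2 * Polynomial.X) * (nonnegS F
      + PowerSeries.C (Polynomial.C (T 1)) * nonnegS F) := by
    rw [G, u, map_add, map_one]
    ring
  rw [hG, h2X, mapInnerCoeff_map_algebraMap_mul, map_add, mapInnerCoeff_coeffAt_C_T_mul,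
    mapInnerCoeff_coeffAt_nonnegS_of_nonneg le_rfl,
    mapInnerCoeff_coeffAt_nonnegS_of_neg (by norm_num), add_zero]

lemma yDeriv_G :
    yDeriv G = PowerSeries.X * PowerSeries.C ((1 + u) * (1 + ubar)) *
      (G - mapInnerCoeff (coeffAt 0) G) := by
  have hu : Polynomial.derivative (1 + u) = 0 := by simp [u]
  have h2X : Polynomial.derivative (2 * Polynomial.X : ℚ[T;T⁻¹][X]) = 2 := by simp
  have hC : PowerSeries.C u * PowerSeries.C ubar = (1 : PowerSeries ℚ[T;T⁻¹][X]) := by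
    rw [← map_mul, u_mul_ubar, map_one]
  rw [coeffAt_zero_G, G, mul_assoc, yDeriv_C_mul, hu, yDeriv_mul, yDeriv_expZ, h2X,
    yDeriv_nonnegS_F]
  simp only [map_zero, zero_mul, zero_add, map_add, map_mul, map_one, map_ofNat]
  linear_combination
    (-(PowerSeries.X * expZ (2 * Polynomial.X) * (1 + PowerSeries.C u) * nonnegS F)) * hC

lemma G_eval_zero :
    (PowerSeries.mk fun n => Polynomial.eval 0 (PowerSeries.coeff n G))
      = PowerSeries.C (1 + T 1) * expZ (-(T 1)) := by
  have hmk : (PowerSeries.mk fun n => Polynomial.eval 0 (PowerSeries.coeff n G))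
      = PowerSeries.map (Polynomial.evalRingHom 0) G := by
    ext; simp
  have hF : PowerSeries.map (Polynomial.evalRingHom 0) F
      = expZ (-T 1) - PowerSeries.C (T (-1)) * expZ (-T (-1)) := by
    simp [F, map_expZ, u, ubar]
  have hN : PowerSeries.map (Polynomial.evalRingHom 0) (nonnegS F) = expZ (-(T 1)) := by
    ext n : 1
    rw [nonnegS_eq_mapInnerCoeff, coeff_map_evalRingHom_zero_mapInnerCoeff, hF]
    have hneg (k : ℤ) : (-T k : ℚ[T;T⁻¹]) = C (-1) * T k := by simp
    rw [map_sub, PowerSeries.coeff_C_mul, hneg, hneg, coeff_expZ_C_mul_T, coeff_expZ_C_mul_T,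
      T_mul, mul_assoc, ← T_add, map_sub]
    show nonnegL _ - nonnegL _ = _
    rw [nonnegL_C_mul_T, nonnegL_C_mul_T, if_pos (by positivity), if_neg (by omega), sub_zero]
  rw [hmk, G, map_mul, map_mul, hN, PowerSeries.map_C, map_expZ]
  simp [u]

end FunctionalEquation

theorem stmt_19 :
    let R := Polynomial (LaurentPolynomial ℚ)
    let u : R := Polynomial.C (LaurentPolynomial.T 1)
    let ubar : R := Polynomial.C (LaurentPolynomial.T (-1))
    let y : R := Polynomial.X
    -- G(u,y) = (1+u)·e^{2yz}·[u^≥]( e^{zu(y-1)+zy/u} − (1/u)·e^{z(y-1)/u+zyu} )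
    let G : PowerSeries R :=
      PowerSeries.C (1 + u) * expZ (2 * y) *
        nonnegS (expZ (u * (y - 1) + y * ubar)
          - PowerSeries.C ubar * expZ (ubar * (y - 1) + y * u))
    -- (i) initial condition G(u,0) = (1+u)·e^{-zu}
    ((PowerSeries.mk fun n => Polynomial.eval 0 (PowerSeries.coeff n G))
        = PowerSeries.C (1 + LaurentPolynomial.T 1) *
            expZ (-(LaurentPolynomial.T 1))) ∧
    -- (ii) ∂G/∂y = z(1+u)(1+1/u)·(G(u,y) − G(0,y))
    ((PowerSeries.mk fun n => Polynomial.derivative (PowerSeries.coeff n G))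
        = PowerSeries.X * PowerSeries.C ((1 + u) * (1 + ubar)) *
            (G - PowerSeries.mk fun n => evalU0 (PowerSeries.coeff n G))) := by
  intro R u ubar y G
  rw [mk_derivative_eq_yDeriv, mk_evalU0_eq_mapInnerCoeff]
  exact ⟨FunctionalEquation.G_eval_zero, FunctionalEquation.yDeriv_G⟩
end
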